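/- arXiv:1602.02345 — 3 statements merged into one kernel-verified Lean document; each statement's English description precedes it below -/
import Mathlib

section
/- Suppose the family {F_θ} satisfies the MLR assumption (Assumption 2), the signed false-null statistics are positively regression dependent (Assumption 3), and, with i_0 the smallest index such that θ_{i_0} = 0 (i_0 = n+1 if all θ_i ≠ 0), the first true-null statistic T_{i_0} is independent of the random vector of false-null statistics (T_{i_k} : i_k < i_0) (Assumption 4). Then Procedure 2 (the directional fixed sequence procedure with constant critical value α) satisfies mdFWER ≤ α. -/
/-!
Let `c` be the two-sided critical value (`F₀ c = 1 - α/2`), `S j = sign θ_j · T_j` the signed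
statistics, `C k` (`correctBefore`) the event that `c ≤ S j` for all `j < k`, and `m` the first
true null (or `n`). A mixed directional error happens either at a false null `k < m` rejected with
the wrong sign after all earlier ones were rejected correctly, i.e. on `C k ∩ {S k ≤ -c}`, or at
the first true null, on `C m ∩ {c ≤ |T m|}`. By MLR, `P(S k < -c) ≤ α P(S k < c)`; since `C k` is
an up-set in the false-null statistics, PRD gives `P(C k | S k < -c) ≤ P(C k | S k < c)`, so the
`k`-th event has probability at most `α P(C k ∩ {S k < c}) = α (P(C k) - P(C (k+1)))`. These
telescope to `α (1 - P(C m))`, while independence gives `P(C m ∩ {c ≤ |T m|}) = α P(C m)`.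
-/

open MeasureTheory ProbabilityTheory Set Filter Topology

structure IsDensityWithCDF (g G : ℝ → ℝ) : Prop where
  integrable : Integrable g
  integral_eq_one : ∫ x, g x = 1
  cdf_eq : ∀ x, G x = ∫ t in Iic x, g t

namespace IsDensityWithCDF

variable {g G : ℝ → ℝ}

lemma of_tendsto_atTop (hnn : ∀ x, 0 ≤ g x) (hG : ∀ x, G x = ∫ t in Iic x, g t)
    (htop : Tendsto G atTop (𝓝 1)) : IsDensityWithCDF g G := by
  have hcover : AECover volume atTop fun x : ℝ => Iic x := aecover_Iic tendsto_id
  have hlim : Tendsto (fun x => ∫ t in Iic x, g t) atTop (𝓝 1) := by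
    simpa only [← hG] using htop
  -- the Bochner integral of a non-integrable function is `0`, which `G → 1` rules out
  have hint : ∀ x, IntegrableOn g (Iic x) := by
    intro x
    by_contra hx
    obtain ⟨y, hy, hxy⟩ := ((hlim.eventually_ne one_ne_zero).and (eventually_ge_atTop x)).exists
    exact hy (integral_undef fun hy' : IntegrableOn g (Iic y) volume =>
      hx (hy'.mono_set (Iic_subset_Iic.mpr hxy)))
  have hnn' : ∀ᵐ x, 0 ≤ g x := ae_of_all _ hnn
  exact ⟨hcover.integrable_of_integral_tendsto_of_nonneg_ae 1 hint hnn' hlim,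
    hcover.integral_eq_of_tendsto_of_nonneg_ae 1 hnn' hint hlim, hG⟩

lemma setIntegral_Ioc (h : IsDensityWithCDF g G) {a b : ℝ} (hab : a ≤ b) :
    ∫ t in Ioc a b, g t = G b - G a := by
  rw [← intervalIntegral.integral_of_le hab, h.cdf_eq, h.cdf_eq,
    intervalIntegral.integral_Iic_sub_Iic h.integrable.integrableOn h.integrable.integrableOn]

lemma setIntegral_Ioi (h : IsDensityWithCDF g G) (b : ℝ) :
    ∫ t in Ioi b, g t = 1 - G b := by
  rw [← compl_Iic, setIntegral_compl measurableSet_Iic h.integrable, h.integral_eq_one, h.cdf_eq]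

end IsDensityWithCDF

lemma setIntegral_mul_setIntegral_le {g h : ℝ → ℝ} {A B : Set ℝ}
    (hA : MeasurableSet A) (hB : MeasurableSet B) (hg : Integrable g) (hh : Integrable h)
    (hle : ∀ s ∈ A, ∀ t ∈ B, h s * g t ≤ g s * h t) :
    (∫ s in A, h s) * (∫ t in B, g t) ≤ (∫ s in A, g s) * (∫ t in B, h t) := by
  rw [← integral_prod_mul, ← integral_prod_mul]
  refine integral_mono_ae (hh.integrableOn.mul_prod hg.integrableOn)
    (hg.integrableOn.mul_prod hh.integrableOn) ?_
  have hmem : ∀ᵐ z ∂(volume.restrict A).prod (volume.restrict B), z ∈ A ×ˢ B := by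
    rw [Measure.prod_restrict]
    exact ae_restrict_mem (hA.prod hB)
  filter_upwards [hmem] with z hz
  exact hle z.1 hz.1 z.2 hz.2

/-- `g₁ ≤ g₂` in the likelihood ratio order: `g₂ / g₁` is nondecreasing. -/
def LRLe (g₁ g₂ : ℝ → ℝ) : Prop :=
  ∀ x₁ x₂, x₁ < x₂ → g₂ x₁ * g₁ x₂ ≤ g₂ x₂ * g₁ x₁

namespace LRLe

variable {g₁ g₂ G₁ G₂ : ℝ → ℝ}

lemma cdf_mul_sub_le (hlr : LRLe g₁ g₂) (h₁ : IsDensityWithCDF g₁ G₁)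
    (h₂ : IsDensityWithCDF g₂ G₂) {a b : ℝ} (hab : a ≤ b) :
    G₂ a * (G₁ b - G₁ a) ≤ G₁ a * (G₂ b - G₂ a) := by
  rw [← h₁.setIntegral_Ioc hab, ← h₂.setIntegral_Ioc hab, h₁.cdf_eq a, h₂.cdf_eq a]
  exact setIntegral_mul_setIntegral_le measurableSet_Iic measurableSet_Ioc h₁.integrable
    h₂.integrable fun s hs t ht => (hlr s t (lt_of_le_of_lt hs ht.1)).trans_eq (mul_comm _ _)

lemma one_sub_cdf_mul_sub_le (hlr : LRLe g₁ g₂) (h₁ : IsDensityWithCDF g₁ G₁)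
    (h₂ : IsDensityWithCDF g₂ G₂) {a b : ℝ} (hab : a ≤ b) :
    (1 - G₁ b) * (G₂ b - G₂ a) ≤ (1 - G₂ b) * (G₁ b - G₁ a) := by
  rw [← h₁.setIntegral_Ioi, ← h₂.setIntegral_Ioi, ← h₁.setIntegral_Ioc hab,
    ← h₂.setIntegral_Ioc hab]
  refine setIntegral_mul_setIntegral_le measurableSet_Ioi measurableSet_Ioc h₂.integrable
    h₁.integrable fun s hs t ht => ?_
  have := hlr t s (lt_of_le_of_lt ht.2 hs)
  linarith [mul_comm (g₁ s) (g₂ t), mul_comm (g₂ s) (g₁ t)]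

end LRLe

section SymmetricCDF

variable {G : ℝ → ℝ}

lemma tendsto_atTop_one_of_symm {g : ℝ → ℝ} (hG : ∀ x, G x = ∫ t in Iic x, g t)
    (hsym : ∀ x, G (-x) = 1 - G x) : Tendsto G atTop (𝓝 1) := by
  have hbot : Tendsto G atBot (𝓝 0) :=
    (tendsto_integral_Iic_zero tendsto_id).congr fun x => (hG x).symm
  have := (hbot.comp tendsto_neg_atTop_atBot).const_sub 1
  rw [sub_zero] at this
  exact this.congr fun x => by simp [hsym]

lemma exists_critical_value (hGc : Continuous G) (hGm : StrictMono G)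
    (hsym : ∀ x, G (-x) = 1 - G x) (htop : Tendsto G atTop (𝓝 1)) {α : ℝ} (hα : α ∈ Ioo 0 1) :
    ∃ c, 0 < c ∧ G (-c) = α / 2 ∧ G c = 1 - α / 2 := by
  have hG0 : G 0 = 1 / 2 := by
    have := hsym 0
    rw [neg_zero] at this
    linarith
  obtain ⟨t, ht, ht0⟩ :=
    ((htop.eventually (lt_mem_nhds (by linarith [hα.1] : 1 - α / 2 < 1))).and
      (eventually_ge_atTop 0)).exists
  obtain ⟨c, -, hc⟩ := intermediate_value_Icc ht0 hGc.continuousOn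
    (⟨by linarith [hα.2], ht.le⟩ : 1 - α / 2 ∈ Icc (G 0) (G t))
  refine ⟨c, hGm.lt_iff_lt.mp ?_, by rw [hsym, hc]; ring, hc⟩
  linarith [hα.2]

lemma two_mul_min_le_iff (hGm : StrictMono G) {c α : ℝ} (hlo : G (-c) = α / 2)
    (hhi : G c = 1 - α / 2) (t : ℝ) : 2 * min (G t) (1 - G t) ≤ α ↔ c ≤ |t| := by
  rw [le_abs', ← hGm.le_iff_le (a := t), ← hGm.le_iff_le (b := t), hlo, hhi]
  constructor
  · intro h
    rcases min_le_iff.mp (show min (G t) (1 - G t) ≤ α / 2 by linarith) with h' | h'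
    · exact Or.inl h'
    · exact Or.inr (by linarith)
  · rintro (h | h)
    · linarith [min_le_left (G t) (1 - G t)]
    · linarith [min_le_right (G t) (1 - G t)]

end SymmetricCDF

lemma Fin.sum_ite_lt_sub_succ {m n : ℕ} (hm : m ≤ n) (u : ℕ → ℝ) :
    ∑ k : Fin n, (if (k : ℕ) < m then u k - u (k + 1) else 0) = u 0 - u m := by
  rw [Fin.sum_univ_eq_sum_range (fun j => if j < m then u j - u (j + 1) else 0),
    ← Finset.sum_range_add_sum_Ico _ hm,
    Finset.sum_congr rfl fun j hj => if_pos (Finset.mem_range.mp hj),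
    Finset.sum_eq_zero fun j hj => if_neg (by simp at hj; omega), add_zero,
    Finset.sum_range_sub']

lemma Fin.exists_first {n : ℕ} (p : Fin n → Prop) :
    ∃ m ≤ n, (∀ j : Fin n, (j : ℕ) < m → ¬ p j) ∧ ∀ h : m < n, p ⟨m, h⟩ := by
  classical
  have hex : ∃ m, m = n ∨ ∃ h : m < n, p ⟨m, h⟩ := ⟨n, Or.inl rfl⟩
  refine ⟨Nat.find hex, Nat.find_min' hex (Or.inl rfl), fun j hj hpj => ?_, fun h => ?_⟩
  · exact Nat.find_min hex hj (Or.inr ⟨j.2, hpj⟩)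
  · rcases Nat.find_spec hex with h' | ⟨_, hp⟩
    · omega
    · exact hp

lemma le_mul_of_mul_one_sub_le {p q α : ℝ} (hp : 0 ≤ p) (hα : α ≤ 1)
    (h : p * (1 - α) ≤ α / 2 * (q - p)) : p ≤ α * q := by
  nlinarith

lemma abs_sign_mul {a : ℝ} (ha : a ≠ 0) (t : ℝ) : |Real.sign a * t| = |t| := by
  rcases Real.sign_apply_eq_of_ne_zero a ha with h | h <;> simp [h]

lemma sign_mul_le_neg_of_mul_neg {a t c : ℝ} (hc : 0 < c) (hat : a * t < 0) (hrej : c ≤ |t|) :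
    Real.sign a * t ≤ -c := by
  have hneg : Real.sign a * t < 0 := by
    rcases lt_trichotomy a 0 with ha | rfl | ha
    · rw [Real.sign_of_neg ha]; linarith [pos_of_mul_neg_right hat ha.le]
    · simp at hat
    · rw [Real.sign_of_pos ha]; linarith [neg_of_mul_neg_right hat ha.le]
  have hne : a ≠ 0 := by rintro rfl; simp at hat
  rcases le_abs'.mp ((abs_sign_mul hne t).symm ▸ hrej) with h | h
  · exact h
  · linarith

section Events

variable {Ω : Type*} [MeasurableSpace Ω] {P : Measure Ω}

lemma measureReal_inter_le_eq_inter_lt [IsFiniteMeasure P] {Y : Ω → ℝ} {y : ℝ}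
    (hatom : P {ω | Y ω = y} = 0) (C : Set Ω) :
    P.real (C ∩ {ω | Y ω ≤ y}) = P.real (C ∩ {ω | Y ω < y}) := by
  rw [← measureReal_sdiff_null (s₁ := C ∩ {ω | Y ω ≤ y}) (s₂ := {ω | Y ω = y})
    (by simp [measureReal_def, hatom])]
  congr 1
  ext ω
  simp only [Set.mem_sdiff, mem_inter_iff, mem_ofPred_eq, and_assoc]
  exact and_congr_right fun _ => (lt_iff_le_and_ne (a := Y ω) (b := y)).symm

lemma measureReal_biUnion_le_telescope [IsProbabilityMeasure P] {n : ℕ} {C : ℕ → Set Ω}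
    (hC : C 0 = univ) {D : Fin n → Set Ω} {m : ℕ} (hm : m ≤ n) {α : ℝ}
    (h : ∀ k : Fin n, (k : ℕ) < m →
      P.real (C k ∩ D k) ≤ α * (P.real (C k) - P.real (C (k + 1)))) :
    P.real (⋃ k : Fin n, ⋃ (_ : (k : ℕ) < m), C k ∩ D k) ≤ α * (1 - P.real (C m)) := by
  calc P.real (⋃ k : Fin n, ⋃ (_ : (k : ℕ) < m), C k ∩ D k)
      ≤ ∑ k : Fin n, P.real (⋃ (_ : (k : ℕ) < m), C k ∩ D k) := measureReal_iUnion_fintype_le _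
    _ ≤ ∑ k : Fin n, α * (if (k : ℕ) < m then P.real (C k) - P.real (C (k + 1)) else 0) := by
      gcongr with k
      by_cases hk : (k : ℕ) < m <;> simp [hk, h k]
    _ = α * (1 - P.real (C m)) := by
      rw [← Finset.mul_sum, Fin.sum_ite_lt_sub_succ hm (fun j => P.real (C j)), hC, probReal_univ]

lemma measureReal_inter_le_of_condProb_le [IsFiniteMeasure P] {C A B : Set Ω}
    (hC : MeasurableSet C) (hAB : A ⊆ B) {α : ℝ} (hα : 0 ≤ α) (hAB' : P.real A ≤ α * P.real B)
    (hcond : P A ≠ 0 → P B ≠ 0 →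
      (∫ ω in A, C.indicator 1 ω ∂P) / P.real A ≤ (∫ ω in B, C.indicator 1 ω ∂P) / P.real B) :
    P.real (C ∩ A) ≤ α * P.real (C ∩ B) := by
  by_cases hA : P A = 0
  · rw [measureReal_def, measure_mono_null inter_subset_right hA, ENNReal.toReal_zero]
    positivity
  have hB : P B ≠ 0 := fun hB => hA (measure_mono_null hAB hB)
  have hApos : 0 < P.real A := ENNReal.toReal_pos hA (measure_ne_top _ _)
  have hBpos : 0 < P.real B := ENNReal.toReal_pos hB (measure_ne_top _ _)
  have key := hcond hA hB
  simp only [setIntegral_indicator hC, Pi.one_apply, setIntegral_const, smul_eq_mul, mul_one,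
    inter_comm _ C] at key
  rw [div_le_div_iff₀ hApos hBpos] at key
  refine le_of_mul_le_mul_right ?_ hBpos
  calc P.real (C ∩ A) * P.real B ≤ P.real (C ∩ B) * P.real A := key
    _ ≤ P.real (C ∩ B) * (α * P.real B) := by gcongr
    _ = α * P.real (C ∩ B) * P.real B := by ring

end Events

section ContinuousCDF

variable {Ω : Type*} [MeasurableSpace Ω] {P : Measure Ω} [IsProbabilityMeasure P]
  {X : Ω → ℝ} {G : ℝ → ℝ}

lemma cdf_map_eq (hX : Measurable X) (hG : ∀ x, P.real {ω | X ω ≤ x} = G x) :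
    ⇑(cdf (P.map X)) = G := by
  have := Measure.isProbabilityMeasure_map (μ := P) hX.aemeasurable
  ext x
  rw [cdf_eq_real, map_measureReal_apply hX measurableSet_Iic]
  exact hG x

lemma tendsto_atTop_one_of_cdf (hX : Measurable X) (hG : ∀ x, P.real {ω | X ω ≤ x} = G x) :
    Tendsto G atTop (𝓝 1) :=
  cdf_map_eq hX hG ▸ tendsto_cdf_atTop _

lemma measure_eq_zero_of_continuous_cdf (hX : Measurable X)
    (hG : ∀ x, P.real {ω | X ω ≤ x} = G x) (hGc : Continuous G) (x : ℝ) :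
    P {ω | X ω = x} = 0 := by
  have := Measure.isProbabilityMeasure_map (μ := P) hX.aemeasurable
  have hatom := (cdf (P.map X)).measure_singleton x
  rw [measure_cdf, Measure.map_apply hX (measurableSet_singleton x), cdf_map_eq hX hG,
    hGc.continuousWithinAt.leftLim_eq, sub_self, ENNReal.ofReal_zero] at hatom
  exact hatom

lemma measureReal_lt_of_continuous_cdf (hX : Measurable X)
    (hG : ∀ x, P.real {ω | X ω ≤ x} = G x) (hGc : Continuous G) (x : ℝ) :
    P.real {ω | X ω < x} = G x := by
  simpa [hG] using
    (measureReal_inter_le_eq_inter_lt (measure_eq_zero_of_continuous_cdf hX hG hGc x) univ).symm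

lemma measureReal_gt_of_cdf (hX : Measurable X) (hG : ∀ x, P.real {ω | X ω ≤ x} = G x)
    (x : ℝ) : P.real {ω | x < X ω} = 1 - G x := by
  have : {ω | x < X ω} = {ω | X ω ≤ x}ᶜ := by ext; simp [not_le]
  rw [this, measureReal_compl (measurableSet_le hX measurable_const), probReal_univ, hG]

lemma measureReal_ge_of_continuous_cdf (hX : Measurable X)
    (hG : ∀ x, P.real {ω | X ω ≤ x} = G x) (hGc : Continuous G) (x : ℝ) :
    P.real {ω | x ≤ X ω} = 1 - G x := by
  have : {ω | x ≤ X ω} = {ω | X ω < x}ᶜ := by ext; simp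
  rw [this, measureReal_compl (measurableSet_lt hX measurable_const), probReal_univ,
    measureReal_lt_of_continuous_cdf hX hG hGc]

lemma measure_sign_mul_eq_zero (hX : Measurable X) (hG : ∀ x, P.real {ω | X ω ≤ x} = G x)
    (hGc : Continuous G) {a : ℝ} (ha : a ≠ 0) (y : ℝ) :
    P {ω | Real.sign a * X ω = y} = 0 := by
  rcases Real.sign_apply_eq_of_ne_zero a ha with h | h <;> rw [h]
  · simpa [neg_eq_iff_eq_neg] using measure_eq_zero_of_continuous_cdf hX hG hGc (-y)
  · simpa using measure_eq_zero_of_continuous_cdf hX hG hGc y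

lemma measureReal_le_abs_eq (hX : Measurable X) (hG : ∀ x, P.real {ω | X ω ≤ x} = G x)
    (hGc : Continuous G) {c α : ℝ} (hc : 0 < c) (hlo : G (-c) = α / 2) (hhi : G c = 1 - α / 2) :
    P.real {ω | c ≤ |X ω|} = α := by
  have hsplit : {ω | c ≤ |X ω|} = {ω | X ω ≤ -c} ∪ {ω | c ≤ X ω} := by
    ext ω; exact le_abs' (a := c) (b := X ω)
  have hdisj : Disjoint {ω | X ω ≤ -c} {ω | c ≤ X ω} :=
    Set.disjoint_left.mpr fun ω h₁ h₂ => by simp only [mem_ofPred_eq] at h₁ h₂; linarith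
  rw [hsplit, measureReal_union hdisj (measurableSet_le measurable_const hX), hG,
    measureReal_ge_of_continuous_cdf hX hG hGc, hlo, hhi]
  ring

/-- By MLR, `X` puts relatively less mass than the null law on the wrong-direction tail beyond
`∓c` than on `(-c, c]`; the null masses `α/2` and `1 - α` of these two sets give the factor `α`. -/
lemma measureReal_sign_mul_lt_neg_le {f F : ℝ → ℝ → ℝ}
    (hMLR : ∀ θ' θ'', θ' < θ'' → LRLe (f θ') (f θ'')) {a : ℝ} (ha : a ≠ 0)
    (h₀ : IsDensityWithCDF (f 0) (F 0)) (hₐ : IsDensityWithCDF (f a) (F a))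
    {c α : ℝ} (hc : 0 ≤ c) (hα : α ≤ 1) (hlo : F 0 (-c) = α / 2) (hhi : F 0 c = 1 - α / 2)
    (hX : Measurable X) (hG : ∀ x, P.real {ω | X ω ≤ x} = F a x) (hGc : Continuous (F a)) :
    P.real {ω | Real.sign a * X ω < -c} ≤ α * P.real {ω | Real.sign a * X ω < c} := by
  refine le_mul_of_mul_one_sub_le measureReal_nonneg hα ?_
  rcases ha.lt_or_gt with hneg | hpos
  · have hflip : ∀ y, {ω | Real.sign a * X ω < y} = {ω | -y < X ω} := fun y => by
      ext ω; simp only [Real.sign_of_neg hneg, mem_ofPred_eq]; constructor <;> intro <;> linarith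
    rw [hflip, hflip, neg_neg, measureReal_gt_of_cdf hX hG, measureReal_gt_of_cdf hX hG]
    have := (hMLR a 0 hneg).one_sub_cdf_mul_sub_le hₐ h₀ (neg_le_self hc)
    rw [hlo, hhi] at this
    linarith
  · simp only [Real.sign_of_pos hpos, one_mul]
    rw [measureReal_lt_of_continuous_cdf hX hG hGc, measureReal_lt_of_continuous_cdf hX hG hGc]
    have := (hMLR 0 a hpos).cdf_mul_sub_le h₀ hₐ (neg_le_self hc)
    rw [hlo, hhi] at this
    linarith

end ContinuousCDF

/-- The half of positive regression dependence (Assumption 3) that conditions on the events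
`{S k < u}`. -/
def IsPRDBelow {Ω ι : Type*} [MeasurableSpace Ω] (P : Measure Ω) (S : ι → Ω → ℝ) : Prop :=
  ∀ k (φ : (ι → ℝ) → ℝ), Measurable φ → Monotone φ → (∃ C, ∀ x, |φ x| ≤ C) →
    ∀ u u' : ℝ, u ≤ u' → P {ω | S k ω < u} ≠ 0 → P {ω | S k ω < u'} ≠ 0 →
      (∫ ω in {ω | S k ω < u}, φ (fun i => S i ω) ∂P) / P.real {ω | S k ω < u} ≤
        (∫ ω in {ω | S k ω < u'}, φ (fun i => S i ω) ∂P) / P.real {ω | S k ω < u'}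

section FixedSequence

variable {Ω : Type*} {n : ℕ} (θ : Fin n → ℝ) (T : Fin n → Ω → ℝ) (c : ℝ)

def correctBefore (m : ℕ) : Set Ω :=
  {ω | ∀ j : Fin n, (j : ℕ) < m → c ≤ Real.sign (θ j) * T j ω}

lemma correctBefore_zero : correctBefore θ T c 0 = univ := by
  ext ω; simp [correctBefore]

lemma correctBefore_succ (k : Fin n) :
    correctBefore θ T c (k + 1) =
      correctBefore θ T c k ∩ {ω | c ≤ Real.sign (θ k) * T k ω} := by
  ext ω
  simp only [correctBefore, mem_inter_iff, mem_ofPred_eq]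
  refine ⟨fun h => ⟨fun j hj => h j (by omega), h k (by omega)⟩, fun ⟨h, hk⟩ j hj => ?_⟩
  rcases Nat.lt_succ_iff_lt_or_eq.mp hj with hj | hj
  · exact h j hj
  · rwa [Fin.ext hj]

lemma mem_correctBefore_or_exists_wrong_sign {ω : Ω} {k : ℕ} (hk : k ≤ n)
    (hrej : ∀ j : Fin n, (j : ℕ) < k → c ≤ |Real.sign (θ j) * T j ω|) :
    ω ∈ correctBefore θ T c k ∨ ∃ j : Fin n, (j : ℕ) < k ∧
      ω ∈ correctBefore θ T c j ∧ Real.sign (θ j) * T j ω ≤ -c := by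
  induction k with
  | zero => exact Or.inl (by simp [correctBefore_zero])
  | succ k ih =>
    rcases ih (by omega) fun j hj => hrej j (by omega) with hC | ⟨j, hj, hCj, hS⟩
    · let j : Fin n := ⟨k, by omega⟩
      rcases le_abs'.mp (hrej j (by simp [j])) with hS | hS
      · exact Or.inr ⟨j, by simp [j], hC, hS⟩
      · exact Or.inl (by rw [correctBefore_succ θ T c j]; exact ⟨hC, hS⟩)
    · exact Or.inr ⟨j, by omega, hCj, hS⟩

lemma directionalError_subset (hc : 0 < c) {m : ℕ} (hm : m ≤ n)
    (hfalse : ∀ j : Fin n, (j : ℕ) < m → θ j ≠ 0) :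
    {ω | ∃ i : Fin n, (∀ j ≤ i, c ≤ |T j ω|) ∧ (θ i = 0 ∨ (θ i ≠ 0 ∧ θ i * T i ω < 0))} ⊆
      (⋃ k : Fin n, ⋃ (_ : (k : ℕ) < m),
        correctBefore θ T c k ∩ {ω | Real.sign (θ k) * T k ω ≤ -c}) ∪
      {ω | ω ∈ correctBefore θ T c m ∧ ∃ h : m < n, c ≤ |T ⟨m, h⟩ ω|} := by
  rintro ω ⟨i, hrej, herr⟩
  have hrej' : ∀ j : Fin n, (j : ℕ) < m → j ≤ i → c ≤ |Real.sign (θ j) * T j ω| :=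
    fun j hjm hji => (abs_sign_mul (hfalse j hjm) _).symm ▸ hrej j hji
  by_cases him : (i : ℕ) < m
  · have hSi : Real.sign (θ i) * T i ω ≤ -c :=
      sign_mul_le_neg_of_mul_neg hc ((herr.resolve_left (hfalse i him)).2) (hrej i le_rfl)
    rcases mem_correctBefore_or_exists_wrong_sign θ T c (k := i + 1) i.2
      (fun j hj => hrej' j (by omega) (Fin.le_def.mpr (by omega))) with hC | ⟨j, hj, hCj, hS⟩
    · linarith [hC i (by omega)]
    · exact Or.inl (mem_iUnion₂.mpr ⟨j, by omega, hCj, hS⟩)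
  · have hmn : m < n := by omega
    rcases mem_correctBefore_or_exists_wrong_sign θ T c hm
      (fun j hj => hrej' j hj (Fin.le_def.mpr (by omega))) with hC | ⟨j, hj, hCj, hS⟩
    · exact Or.inr ⟨hC, hmn, hrej _ (Fin.le_def.mpr (by simp; omega))⟩
    · exact Or.inl (mem_iUnion₂.mpr ⟨j, hj, hCj, hS⟩)

variable [MeasurableSpace Ω] {P : Measure Ω} {θ T c}

lemma measurableSet_correctBefore (hT : ∀ i, Measurable (T i)) (m : ℕ) :
    MeasurableSet (correctBefore θ T c m) := by
  simp only [correctBefore, ofPred_forall]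
  exact .iInter fun j => .iInter fun _ => measurableSet_le measurable_const ((hT j).const_mul _)

lemma measureReal_correctBefore_sub_succ [IsFiniteMeasure P] (hT : ∀ i, Measurable (T i))
    (k : Fin n) :
    P.real (correctBefore θ T c k) - P.real (correctBefore θ T c (k + 1)) =
      P.real (correctBefore θ T c k ∩ {ω | Real.sign (θ k) * T k ω < c}) := by
  have hsplit := measureReal_inter_add_sdiff (μ := P) (s := correctBefore θ T c k)
    (t := {ω | c ≤ Real.sign (θ k) * T k ω})
    (measurableSet_le measurable_const ((hT k).const_mul (Real.sign (θ k))))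
  rw [correctBefore_succ, ← hsplit, add_sub_cancel_left, sdiff_eq]
  congr 2
  ext ω
  simp [not_le]

lemma condProb_correctBefore_mono
    (hPRD : IsPRDBelow P fun (i : {i // θ i ≠ 0}) ω => Real.sign (θ i) * T i ω)
    {k : Fin n} (hk : θ k ≠ 0) (hprev : ∀ j < k, θ j ≠ 0) {u u' : ℝ} (hu : u ≤ u') :
    P {ω | Real.sign (θ k) * T k ω < u} ≠ 0 → P {ω | Real.sign (θ k) * T k ω < u'} ≠ 0 →
      (∫ ω in {ω | Real.sign (θ k) * T k ω < u}, (correctBefore θ T c k).indicator 1 ω ∂P) /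
          P.real {ω | Real.sign (θ k) * T k ω < u} ≤
        (∫ ω in {ω | Real.sign (θ k) * T k ω < u'}, (correctBefore θ T c k).indicator 1 ω ∂P) /
          P.real {ω | Real.sign (θ k) * T k ω < u'} := by
  let U : Set ({i // θ i ≠ 0} → ℝ) := {y | ∀ j : {i // θ i ≠ 0}, j.1 < k → c ≤ y j}
  have hU : MeasurableSet U := by
    simp only [U, ofPred_forall]
    exact .iInter fun j => .iInter fun _ =>
      measurableSet_le measurable_const (measurable_pi_apply j)
  have hmono : Monotone (U.indicator (1 : ({i // θ i ≠ 0} → ℝ) → ℝ)) := by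
    intro x y hxy
    by_cases hx : x ∈ U
    · have hy : y ∈ U := fun j hj => (hx j hj).trans (hxy j)
      simp [hx, hy]
    · simp only [indicator_of_notMem hx]
      exact indicator_nonneg (fun _ _ => zero_le_one) y
  have hbdd : ∃ C, ∀ x, |U.indicator (1 : ({i // θ i ≠ 0} → ℝ) → ℝ) x| ≤ C :=
    ⟨1, fun x => by by_cases hx : x ∈ U <;> simp [hx]⟩
  have hcomp : ∀ ω, U.indicator 1 (fun i : {i // θ i ≠ 0} => Real.sign (θ i) * T i ω) =
      (correctBefore θ T c k).indicator (1 : Ω → ℝ) ω := by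
    intro ω
    have hmem : (fun i : {i // θ i ≠ 0} => Real.sign (θ i) * T i ω) ∈ U ↔
        ω ∈ correctBefore θ T c k :=
      ⟨fun h j hj => h ⟨j, hprev j hj⟩ hj, fun h j hj => h j hj⟩
    by_cases hω : ω ∈ correctBefore θ T c k
    · simp [hω, hmem.mpr hω]
    · simp [hω, mt hmem.mp hω]
  simpa only [hcomp] using hPRD ⟨k, hk⟩ _ (measurable_one.indicator hU) hmono hbdd u u' hu

lemma measureReal_correctBefore_inter_wrong_sign_le [IsFiniteMeasure P]
    (hT : ∀ i, Measurable (T i))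
    (hPRD : IsPRDBelow P fun (i : {i // θ i ≠ 0}) ω => Real.sign (θ i) * T i ω)
    {k : Fin n} (hk : θ k ≠ 0) (hprev : ∀ j < k, θ j ≠ 0) (hc : 0 ≤ c) {α : ℝ} (hα : 0 ≤ α)
    (hsingle : P.real {ω | Real.sign (θ k) * T k ω < -c} ≤
      α * P.real {ω | Real.sign (θ k) * T k ω < c})
    (hatom : P {ω | Real.sign (θ k) * T k ω = -c} = 0) :
    P.real (correctBefore θ T c k ∩ {ω | Real.sign (θ k) * T k ω ≤ -c}) ≤
      α * (P.real (correctBefore θ T c k) - P.real (correctBefore θ T c (k + 1))) := by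
  rw [measureReal_inter_le_eq_inter_lt hatom, measureReal_correctBefore_sub_succ hT]
  exact measureReal_inter_le_of_condProb_le (measurableSet_correctBefore hT k)
    (fun ω (h : _ < -c) => show _ < c by linarith) hα hsingle
    (condProb_correctBefore_mono hPRD hk hprev (by linarith))

lemma measureReal_correctBefore_inter_rejected {i₀ : Fin n}
    (hind : IndepFun (T i₀) (fun ω (j : {j // j < i₀}) => T j ω) P) {α : ℝ}
    (hrej : P.real {ω | c ≤ |T i₀ ω|} = α) :
    P.real (correctBefore θ T c i₀ ∩ {ω | c ≤ |T i₀ ω|}) =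
      α * P.real (correctBefore θ T c i₀) := by
  have hC : correctBefore θ T c i₀ = (fun ω (j : {j // j < i₀}) => T j ω) ⁻¹'
      {y | ∀ j : {j // j < i₀}, c ≤ Real.sign (θ j) * y j} :=
    Set.ext fun ω => ⟨fun h j => h j j.2, fun h j hj => h ⟨j, hj⟩⟩
  have hmeas : MeasurableSet
      {y : {j // j < i₀} → ℝ | ∀ j : {j // j < i₀}, c ≤ Real.sign (θ j) * y j} := by
    simp only [ofPred_forall]
    exact .iInter fun j => measurableSet_le measurable_const ((measurable_pi_apply j).const_mul _)
  have := hind.measure_inter_preimage_eq_mul _ _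
    (measurableSet_le measurable_const continuous_abs.measurable : MeasurableSet {x : ℝ | c ≤ |x|})
    hmeas
  rw [inter_comm, hC, ← hrej, measureReal_def, measureReal_def, measureReal_def,
    ← ENNReal.toReal_mul]
  exact congrArg ENNReal.toReal this

lemma measureReal_correctBefore_and_rejected_le {m : ℕ}
    (hind : ∀ h : m < n,
      IndepFun (T ⟨m, h⟩) (fun ω (j : {j // j < (⟨m, h⟩ : Fin n)}) => T j ω) P)
    {α : ℝ} (hα : 0 ≤ α) (hrej : ∀ h : m < n, P.real {ω | c ≤ |T ⟨m, h⟩ ω|} = α) :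
    P.real {ω | ω ∈ correctBefore θ T c m ∧ ∃ h : m < n, c ≤ |T ⟨m, h⟩ ω|} ≤
      α * P.real (correctBefore θ T c m) := by
  by_cases hm : m < n
  · have hset : {ω | ω ∈ correctBefore θ T c m ∧ ∃ h : m < n, c ≤ |T ⟨m, h⟩ ω|} =
        correctBefore θ T c (⟨m, hm⟩ : Fin n) ∩ {ω | c ≤ |T ⟨m, hm⟩ ω|} := by
      ext ω; simp [hm]
    rw [hset, measureReal_correctBefore_inter_rejected (hind hm) (hrej hm)]
  · simp only [hm, IsEmpty.exists_iff, and_false, ofPred_false, measureReal_empty]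
    positivity

end FixedSequence

theorem procedure2_controls_mdFWER_positive_dependence_general
    {Ω : Type*} [MeasurableSpace Ω] (Pr : Measure Ω) [IsProbabilityMeasure Pr]
    (F : ℝ → ℝ → ℝ)
    (hFcont : ∀ θ', Continuous (F θ'))
    (hF0strict : StrictMono (F 0))
    (hFsym : ∀ x : ℝ, F 0 (-x) = 1 - F 0 x)
    -- MLR assumption (Assumption 2)
    (f : ℝ → ℝ → ℝ)
    (hf_nonneg : ∀ θ' x, 0 ≤ f θ' x)
    (hf_cdf : ∀ θ' x, F θ' x = ∫ t in Set.Iic x, f θ' t)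
    (hMLR : ∀ θ' θ'' : ℝ, θ' < θ'' → ∀ x₁ x₂ : ℝ, x₁ < x₂ →
      f θ'' x₁ * f θ' x₂ ≤ f θ'' x₂ * f θ' x₁)
    (n : ℕ) (θ : Fin n → ℝ)
    (T : Fin n → Ω → ℝ) (hT : ∀ i, Measurable (T i))
    (hcdf : ∀ i x, (Pr {ω | T i ω ≤ x}).toReal = F (θ i) x)
    -- Assumption 3: positive regression dependence of the signed false-null statistics
    (hPRD : ∀ k : {i : Fin n // θ i ≠ 0},
      ∀ φ : ({i : Fin n // θ i ≠ 0} → ℝ) → ℝ,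
      Measurable φ → Monotone φ → (∃ C, ∀ x, |φ x| ≤ C) →
      ∀ u u' : ℝ, u ≤ u' →
        (Pr {ω | u ≤ Real.sign (θ k.1) * T k.1 ω} ≠ 0 →
         Pr {ω | u' ≤ Real.sign (θ k.1) * T k.1 ω} ≠ 0 →
          (∫ ω in {ω | u ≤ Real.sign (θ k.1) * T k.1 ω},
              φ (fun i => Real.sign (θ i.1) * T i.1 ω) ∂Pr)
              / (Pr {ω | u ≤ Real.sign (θ k.1) * T k.1 ω}).toReal
            ≤ (∫ ω in {ω | u' ≤ Real.sign (θ k.1) * T k.1 ω},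
              φ (fun i => Real.sign (θ i.1) * T i.1 ω) ∂Pr)
              / (Pr {ω | u' ≤ Real.sign (θ k.1) * T k.1 ω}).toReal) ∧
        (Pr {ω | Real.sign (θ k.1) * T k.1 ω < u} ≠ 0 →
         Pr {ω | Real.sign (θ k.1) * T k.1 ω < u'} ≠ 0 →
          (∫ ω in {ω | Real.sign (θ k.1) * T k.1 ω < u},
              φ (fun i => Real.sign (θ i.1) * T i.1 ω) ∂Pr)
              / (Pr {ω | Real.sign (θ k.1) * T k.1 ω < u}).toReal
            ≤ (∫ ω in {ω | Real.sign (θ k.1) * T k.1 ω < u'},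
              φ (fun i => Real.sign (θ i.1) * T i.1 ω) ∂Pr)
              / (Pr {ω | Real.sign (θ k.1) * T k.1 ω < u'}).toReal))
    -- Assumption 4: the first true-null statistic is independent of the
    -- false-null statistics preceding it
    (hindep : ∀ i₀ : Fin n, θ i₀ = 0 → (∀ j, j < i₀ → θ j ≠ 0) →
      IndepFun (T i₀) (fun ω => fun j : {j : Fin n // j < i₀} => T j.1 ω) Pr)
    (α : ℝ) (hα : α ∈ Set.Ioo (0 : ℝ) 1) :
    (Pr {ω | ∃ i : Fin n,
        (∀ j : Fin n, j ≤ i →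
          2 * min (F 0 (T j ω)) (1 - F 0 (T j ω)) ≤ α) ∧
        (θ i = 0 ∨ (θ i ≠ 0 ∧ θ i * T i ω < 0))}).toReal ≤ α := by
  have htop₀ := tendsto_atTop_one_of_symm (hf_cdf 0) hFsym
  have h₀ := IsDensityWithCDF.of_tendsto_atTop (hf_nonneg 0) (hf_cdf 0) htop₀
  have hdens : ∀ i, IsDensityWithCDF (f (θ i)) (F (θ i)) := fun i =>
    .of_tendsto_atTop (hf_nonneg _) (hf_cdf _) (tendsto_atTop_one_of_cdf (hT i) (hcdf i))
  obtain ⟨c, hc, hlo, hhi⟩ := exists_critical_value (hFcont 0) hF0strict hFsym htop₀ hα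
  obtain ⟨m, hm, hfalse, hnull⟩ := Fin.exists_first fun i => θ i = 0
  have hPRD' : IsPRDBelow Pr fun (i : {i // θ i ≠ 0}) ω => Real.sign (θ i) * T i ω :=
    fun k φ hφ hmono hbdd u u' hu => (hPRD k φ hφ hmono hbdd u u' hu).2
  have hwrong : ∀ k : Fin n, (k : ℕ) < m →
      Pr.real (correctBefore θ T c k ∩ {ω | Real.sign (θ k) * T k ω ≤ -c}) ≤
        α * (Pr.real (correctBefore θ T c k) - Pr.real (correctBefore θ T c (k + 1))) :=
    fun k hk => measureReal_correctBefore_inter_wrong_sign_le hT hPRD' (hfalse k hk)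
      (fun j hj => hfalse j (lt_trans hj hk)) hc.le hα.1.le
      (measureReal_sign_mul_lt_neg_le hMLR (hfalse k hk) h₀ (hdens k) hc.le hα.2.le hlo hhi
        (hT k) (hcdf k) (hFcont _))
      (measure_sign_mul_eq_zero (hT k) (hcdf k) (hFcont _) (hfalse k hk) _)
  have hfirst := measureReal_correctBefore_and_rejected_le (θ := θ) (c := c)
    (fun h => hindep _ (hnull h) fun j hj => hfalse j hj) hα.1.le
    (fun h => measureReal_le_abs_eq (hT _) (hnull h ▸ hcdf ⟨m, h⟩) (hFcont 0) hc hlo hhi)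
  simp_rw [two_mul_min_le_iff hF0strict hlo hhi]
  calc _ ≤ _ := measureReal_mono (directionalError_subset θ T c hc hm hfalse)
    _ ≤ _ := measureReal_union_le _ _
    _ ≤ α * (1 - Pr.real (correctBefore θ T c m)) + α * Pr.real (correctBefore θ T c m) :=
      add_le_add (measureReal_biUnion_le_telescope (correctBefore_zero θ T c) hm hwrong) hfirst
    _ = α := by ring

/-- Theorem 3: Under MLR (Assumption 2), positive regression dependence
of the signed false-null statistics (Assumption 3), and independence of the first
true-null statistic from the preceding false-null statistics (Assumption 4),
Procedure 2 (constant critical value α) satisfies mdFWER ≤ α. -/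
theorem procedure2_controls_mdFWER_positive_dependence
    {Ω : Type*} [MeasurableSpace Ω] (Pr : Measure Ω) [IsProbabilityMeasure Pr]
    (F : ℝ → ℝ → ℝ)
    (hFcont : ∀ θ', Continuous (F θ'))
    (hFmono : ∀ θ', Monotone (F θ'))
    (hF0strict : StrictMono (F 0))
    (hFsym : ∀ x : ℝ, F 0 (-x) = 1 - F 0 x)
    (hstoch : ∀ θ' θ'' : ℝ, θ' ≤ θ'' → ∀ x, F θ'' x ≤ F θ' x)
    -- MLR assumption (Assumption 2)
    (f : ℝ → ℝ → ℝ)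
    (hf_nonneg : ∀ θ' x, 0 ≤ f θ' x)
    (hf_meas : ∀ θ', Measurable (f θ'))
    (hf_cdf : ∀ θ' x, F θ' x = ∫ t in Set.Iic x, f θ' t)
    (hMLR : ∀ θ' θ'' : ℝ, θ' < θ'' → ∀ x₁ x₂ : ℝ, x₁ < x₂ →
      f θ'' x₁ * f θ' x₂ ≤ f θ'' x₂ * f θ' x₁)
    (n : ℕ) (θ : Fin n → ℝ)
    (T : Fin n → Ω → ℝ) (hT : ∀ i, Measurable (T i))
    (hcdf : ∀ i x, (Pr {ω | T i ω ≤ x}).toReal = F (θ i) x)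
    -- Assumption 3: positive regression dependence of the signed false-null statistics
    (hPRD : ∀ k : {i : Fin n // θ i ≠ 0},
      ∀ φ : ({i : Fin n // θ i ≠ 0} → ℝ) → ℝ,
      Measurable φ → Monotone φ → (∃ C, ∀ x, |φ x| ≤ C) →
      ∀ u u' : ℝ, u ≤ u' →
        (Pr {ω | u ≤ Real.sign (θ k.1) * T k.1 ω} ≠ 0 →
         Pr {ω | u' ≤ Real.sign (θ k.1) * T k.1 ω} ≠ 0 →
          (∫ ω in {ω | u ≤ Real.sign (θ k.1) * T k.1 ω},
              φ (fun i => Real.sign (θ i.1) * T i.1 ω) ∂Pr)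
              / (Pr {ω | u ≤ Real.sign (θ k.1) * T k.1 ω}).toReal
            ≤ (∫ ω in {ω | u' ≤ Real.sign (θ k.1) * T k.1 ω},
              φ (fun i => Real.sign (θ i.1) * T i.1 ω) ∂Pr)
              / (Pr {ω | u' ≤ Real.sign (θ k.1) * T k.1 ω}).toReal) ∧
        (Pr {ω | Real.sign (θ k.1) * T k.1 ω < u} ≠ 0 →
         Pr {ω | Real.sign (θ k.1) * T k.1 ω < u'} ≠ 0 →
          (∫ ω in {ω | Real.sign (θ k.1) * T k.1 ω < u},
              φ (fun i => Real.sign (θ i.1) * T i.1 ω) ∂Pr)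
              / (Pr {ω | Real.sign (θ k.1) * T k.1 ω < u}).toReal
            ≤ (∫ ω in {ω | Real.sign (θ k.1) * T k.1 ω < u'},
              φ (fun i => Real.sign (θ i.1) * T i.1 ω) ∂Pr)
              / (Pr {ω | Real.sign (θ k.1) * T k.1 ω < u'}).toReal))
    -- Assumption 4: the first true-null statistic is independent of the
    -- false-null statistics preceding it
    (hindep : ∀ i₀ : Fin n, θ i₀ = 0 → (∀ j, j < i₀ → θ j ≠ 0) →
      IndepFun (T i₀) (fun ω => fun j : {j : Fin n // j < i₀} => T j.1 ω) Pr)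
    (α : ℝ) (hα : α ∈ Set.Ioo (0 : ℝ) 1) :
    (Pr {ω | ∃ i : Fin n,
        (∀ j : Fin n, j ≤ i →
          2 * min (F 0 (T j ω)) (1 - F 0 (T j ω)) ≤ α) ∧
        (θ i = 0 ∨ (θ i ≠ 0 ∧ θ i * T i ω < 0))}).toReal ≤ α :=
  procedure2_controls_mdFWER_positive_dependence_general Pr F hFcont hF0strict hFsym f hf_nonneg
    hf_cdf hMLR n θ T hT hcdf hPRD hindep α hα
end

section
/- Suppose the family {F_θ} satisfies the MLR assumption (Assumption 2) and the signed false-null statistics are positively regression dependent (Assumption 3), with no assumption on the dependence between the true-null statistics and the false-null statistics. Then Procedure 2 (the directional fixed sequence procedure with constant critical value α) satisfies mdFWER ≤ 2α; consequently, the directional fixed sequence procedure with common critical constant α/2 at every step satisfies mdFWER ≤ α. -/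
/-!
Let `c > 0` be the two-sided critical value, `F₀(-c) = α/2`, and `S_k = sign θ_k · T_k` the signed
false-null statistics. Look at the first index where the procedure errs. If it is a true null, it is
the first true null, and it was rejected: probability at most `α`. Otherwise it is a false null `k`
with `S_k ≤ -c` while every earlier hypothesis is a false null with `S_j ≥ c`. Positive regression
dependence bounds the chance of the latter by `ρ = α / (2(1 - α))` times the chance of the
companion event with `-c ≤ S_k < c` instead, and the MLR property supplies the constant `ρ` by
comparing the law of `S_k` with the null law on `{s < -c}` and on `[-c, c)`. The companion events
are disjoint, so the type 3 errors contribute at most `ρ`, and `α + ρ ≤ 2α` whenever `α ≤ 1/2`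
(for `α > 1/2` the bound `2α` exceeds one).
-/

open MeasureTheory ProbabilityTheory Filter Set Topology
open scoped ENNReal

theorem withDensity_mul_withDensity_le {α : Type*} [MeasurableSpace α] {μ : Measure α}
    {g h : α → ℝ≥0∞} (hg : Measurable g) (hh : Measurable h) {P Q : Set α}
    (hP : MeasurableSet P) (hQ : MeasurableSet Q)
    (hgh : ∀ p ∈ P, ∀ q ∈ Q, g p * h q ≤ h p * g q) :
    μ.withDensity g P * μ.withDensity h Q ≤ μ.withDensity h P * μ.withDensity g Q := by
  simp only [withDensity_apply _ hP, withDensity_apply _ hQ]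
  calc (∫⁻ p in P, g p ∂μ) * ∫⁻ q in Q, h q ∂μ
      = ∫⁻ p in P, ∫⁻ q in Q, g p * h q ∂μ ∂μ := by
        rw [← lintegral_mul_const _ hg]; simp_rw [lintegral_const_mul _ hh]
    _ ≤ ∫⁻ p in P, ∫⁻ q in Q, h p * g q ∂μ ∂μ :=
        setLIntegral_mono' hP fun p hp => setLIntegral_mono' hQ fun q hq => hgh p hp q hq
    _ = (∫⁻ p in P, h p ∂μ) * ∫⁻ q in Q, g q ∂μ := by
        rw [← lintegral_mul_const _ hh]; simp_rw [lintegral_const_mul _ hg]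

section Density

variable {g G : ℝ → ℝ}

theorem withDensity_ofReal_Iic (hg : ∀ t, 0 ≤ g t) (hG : ∀ x, G x = ∫ t in Iic x, g t)
    (hGtop : Tendsto G atTop (𝓝 1)) (x : ℝ) :
    volume.withDensity (fun t => ENNReal.ofReal (g t)) (Iic x) = ENNReal.ofReal (G x) := by
  obtain ⟨y, hxy, hy⟩ := ((eventually_ge_atTop x).and (hGtop.eventually_ne one_ne_zero)).exists
  -- `G y ≠ 0` rules out the junk value `0` of the integral of a non-integrable function
  have hint : IntegrableOn g (Iic y) := Integrable.of_integral_ne_zero (hG y ▸ hy)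
  rw [withDensity_apply _ measurableSet_Iic, hG,
    ofReal_integral_eq_lintegral_ofReal (hint.mono_set (Iic_subset_Iic.2 hxy))
      (ae_of_all _ fun t => hg t)]

theorem isProbabilityMeasure_withDensity_ofReal (hg : ∀ t, 0 ≤ g t)
    (hG : ∀ x, G x = ∫ t in Iic x, g t) (hGtop : Tendsto G atTop (𝓝 1)) :
    IsProbabilityMeasure (volume.withDensity fun t => ENNReal.ofReal (g t)) := by
  constructor
  refine tendsto_nhds_unique (tendsto_measure_Iic_atTop _) ?_
  simp_rw [withDensity_ofReal_Iic hg hG hGtop]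
  simpa using (ENNReal.tendsto_ofReal hGtop)

theorem map_eq_withDensity_ofReal {Ω : Type*} [MeasurableSpace Ω] {μ : Measure Ω}
    [IsProbabilityMeasure μ] {X : Ω → ℝ} (hX : Measurable X) (hg : ∀ t, 0 ≤ g t)
    (hXg : ∀ x, μ.real {ω | X ω ≤ x} = ∫ t in Iic x, g t) :
    μ.map X = volume.withDensity fun t => ENNReal.ofReal (g t) := by
  have := Measure.isProbabilityMeasure_map (μ := μ) hX.aemeasurable
  have hcdf : ∀ x, cdf (μ.map X) x = ∫ t in Iic x, g t := fun x => by
    rw [cdf_eq_real, map_measureReal_apply hX measurableSet_Iic]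
    exact hXg x
  refine Measure.ext_of_Iic _ _ fun x => ?_
  rw [withDensity_ofReal_Iic hg hcdf (tendsto_cdf_atTop _), ofReal_cdf]

end Density

section CDF

variable {ν : Measure ℝ} [IsProbabilityMeasure ν] {G : ℝ → ℝ}

theorem measureReal_Ioc_eq_sub (hν : ∀ x, ν.real (Iic x) = G x) {x y : ℝ} (hxy : x ≤ y) :
    ν.real (Ioc x y) = G y - G x := by
  rw [← Iic_sdiff_Iic, measureReal_sdiff (Iic_subset_Iic.2 hxy) measurableSet_Iic, hν, hν]

variable [NullSingletonClass ν]

theorem measureReal_setOf_sign_mul_lt_neg (hν : ∀ x, ν.real (Iic x) = G x)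
    (hsym : ∀ x, G (-x) = 1 - G x) {θ : ℝ} (hθ : θ ≠ 0) (c : ℝ) :
    ν.real {x | Real.sign θ * x < -c} = G (-c) := by
  rcases Real.sign_apply_eq_of_ne_zero θ hθ with hσ | hσ <;> rw [hσ]
  · have hset : {x : ℝ | -1 * x < -c} = (Iic c)ᶜ := by ext x; simp
    rw [hset, measureReal_compl measurableSet_Iic, probReal_univ, hν, hsym]
  · simp_rw [one_mul]
    exact (measureReal_congr Iio_ae_eq_Iic).trans (hν _)

theorem measureReal_setOf_sign_mul_mem_Ico (hν : ∀ x, ν.real (Iic x) = G x) {θ : ℝ} (hθ : θ ≠ 0)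
    {c : ℝ} (hc : 0 ≤ c) :
    ν.real {x | -c ≤ Real.sign θ * x ∧ Real.sign θ * x < c} = G c - G (-c) := by
  rw [← measureReal_Ioc_eq_sub hν (by linarith)]
  rcases Real.sign_apply_eq_of_ne_zero θ hθ with hσ | hσ <;> rw [hσ]
  · congr 1
    ext x
    simp only [mem_ofPred_eq, mem_Ioc, neg_one_mul, neg_le_neg_iff, neg_lt]
    exact and_comm
  · simp_rw [one_mul]
    exact measureReal_congr Ico_ae_eq_Ioc

theorem measureReal_setOf_le_abs (hν : ∀ x, ν.real (Iic x) = G x) {c : ℝ} (hc : 0 ≤ c) :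
    ν.real {x | c ≤ |x|} = 1 - (G c - G (-c)) := by
  have hset : {x : ℝ | c ≤ |x|} = (Ioo (-c) c)ᶜ := by
    ext x; simp only [mem_ofPred_eq, mem_compl_iff, mem_Ioo, le_abs', not_and_or, not_lt]
  rw [hset, measureReal_compl measurableSet_Ioo, probReal_univ, measureReal_congr Ioo_ae_eq_Ioc,
    measureReal_Ioc_eq_sub hν (by linarith)]

end CDF

section CriticalValue

variable {F₀ : ℝ → ℝ}

theorem tendsto_atTop_one_of_symm_s16 (hbot : Tendsto F₀ atBot (𝓝 0))
    (hsym : ∀ x, F₀ (-x) = 1 - F₀ x) : Tendsto F₀ atTop (𝓝 1) := by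
  have := (hbot.comp tendsto_neg_atTop_atBot).const_sub 1
  simp only [sub_zero] at this
  exact this.congr fun x => by simp [hsym]

theorem exists_pos_eq_div_two_of_symm (hcont : Continuous F₀) (hmono : StrictMono F₀)
    (hsym : ∀ x, F₀ (-x) = 1 - F₀ x) (hbot : Tendsto F₀ atBot (𝓝 0)) {a : ℝ}
    (ha : a ∈ Ioo (0 : ℝ) 1) : ∃ c, 0 < c ∧ F₀ (-c) = a / 2 := by
  have hhalf : F₀ 0 = 1 / 2 := by linarith [neg_zero (G := ℝ) ▸ hsym 0]
  obtain ⟨x, hx, hx0⟩ :=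
    ((hbot.eventually (gt_mem_nhds (by linarith [ha.1] : (0 : ℝ) < a / 2))).and
      (eventually_le_atBot 0)).exists
  obtain ⟨y, -, hy⟩ := intermediate_value_Icc hx0 hcont.continuousOn
    ⟨hx.le, by linarith [ha.2]⟩
  refine ⟨-y, neg_pos.2 (hmono.lt_iff_lt.1 ?_), by rw [neg_neg, hy]⟩
  linarith [ha.2]

theorem le_abs_of_twoSidedPValue_le (hmono : StrictMono F₀) (hsym : ∀ x, F₀ (-x) = 1 - F₀ x)
    {a c t : ℝ} (hc : F₀ (-c) = a / 2) (ht : 2 * min (F₀ t) (1 - F₀ t) ≤ a) : c ≤ |t| := by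
  rcases min_le_iff.1 (show min (F₀ t) (1 - F₀ t) ≤ a / 2 by linarith) with h | h
  · have : t ≤ -c := hmono.le_iff_le.1 (hc ▸ h)
    rw [le_abs']; exact Or.inl this
  · have : -t ≤ -c := hmono.le_iff_le.1 (by rw [hsym, hc]; exact h)
    rw [le_abs']; exact Or.inr (by linarith)

end CriticalValue

theorem Real.sign_mul_eq_abs_of_mul_nonneg {θ t : ℝ} (hθ : θ ≠ 0) (h : 0 ≤ θ * t) :
    Real.sign θ * t = |t| := by
  rcases hθ.lt_or_gt with hθ | hθ
  · rw [Real.sign_of_neg hθ, abs_of_nonpos (by nlinarith)]; ring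
  · rw [Real.sign_of_pos hθ, abs_of_nonneg (by nlinarith)]; ring

theorem Real.sign_mul_eq_neg_abs_of_mul_neg {θ t : ℝ} (h : θ * t < 0) :
    Real.sign θ * t = -|t| := by
  rcases lt_trichotomy θ 0 with hθ | rfl | hθ
  · rw [Real.sign_of_neg hθ, abs_of_nonneg (by nlinarith)]; ring
  · simp at h
  · rw [Real.sign_of_pos hθ, abs_of_nonpos (by nlinarith)]; ring

theorem exists_first_true_null_or_wrong_sign {ι : Type*} [LinearOrder ι] [WellFoundedLT ι]
    {θ t : ι → ℝ} {c : ℝ}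
    (h : ∃ i, (∀ j ≤ i, c ≤ |t j|) ∧ (θ i = 0 ∨ (θ i ≠ 0 ∧ θ i * t i < 0))) :
    (∃ i, θ i = 0 ∧ (∀ j < i, θ j ≠ 0) ∧ c ≤ |t i|) ∨
      ∃ k : {i // θ i ≠ 0}, (∀ j : {i // θ i ≠ 0}, j < k → c ≤ Real.sign (θ j) * t j) ∧
        Real.sign (θ k) * t k ≤ -c := by
  obtain ⟨i, hi⟩ := exists_minimal_of_wellFoundedLT _ h
  obtain ⟨⟨hrej, herr⟩, hmin⟩ := minimal_iff_forall_lt.1 hi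
  have hprev : ∀ j < i, θ j ≠ 0 ∧ c ≤ Real.sign (θ j) * t j := by
    intro j hj
    have hok : ¬(θ j = 0 ∨ (θ j ≠ 0 ∧ θ j * t j < 0)) :=
      fun herr' => hmin hj ⟨fun l hl => hrej l (hl.trans hj.le), herr'⟩
    simp only [not_or, not_and, not_lt] at hok
    refine ⟨hok.1, ?_⟩
    rw [Real.sign_mul_eq_abs_of_mul_nonneg hok.1 (hok.2 hok.1)]
    exact hrej j hj.le
  rcases herr with h0 | ⟨hne, hneg⟩
  · exact Or.inl ⟨i, h0, fun j hj => (hprev j hj).1, hrej i le_rfl⟩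
  · refine Or.inr ⟨⟨i, hne⟩, fun j hj => (hprev j hj).2, ?_⟩
    rw [Real.sign_mul_eq_neg_abs_of_mul_neg hneg]
    linarith [hrej i le_rfl]

theorem ofReal_mul_le_of_sign_mul_lt {f : ℝ → ℝ → ℝ} (hf : ∀ θ x, 0 ≤ f θ x)
    (hMLR : ∀ θ' θ'' : ℝ, θ' < θ'' → ∀ x₁ x₂ : ℝ, x₁ < x₂ →
      f θ'' x₁ * f θ' x₂ ≤ f θ'' x₂ * f θ' x₁) {θ p q : ℝ} (hθ : θ ≠ 0)
    (hpq : Real.sign θ * p < Real.sign θ * q) :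
    ENNReal.ofReal (f θ p) * ENNReal.ofReal (f 0 q) ≤
      ENNReal.ofReal (f 0 p) * ENNReal.ofReal (f θ q) := by
  rw [← ENNReal.ofReal_mul (hf _ _), ← ENNReal.ofReal_mul (hf _ _)]
  refine ENNReal.ofReal_le_ofReal ?_
  rcases hθ.lt_or_gt with hθ | hθ
  · rw [Real.sign_of_neg hθ] at hpq
    linarith [hMLR θ 0 hθ q p (by linarith), mul_comm (f 0 q) (f θ p)]
  · rw [Real.sign_of_pos hθ] at hpq
    linarith [hMLR 0 θ hθ p q (by linarith), mul_comm (f θ q) (f 0 p)]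

section Probability

variable {Ω : Type*} [MeasurableSpace Ω] {μ : Measure Ω}

theorem measureReal_sign_mul_lt_mul_le_of_mlr [IsFiniteMeasure μ] {X : Ω → ℝ}
    (hX : Measurable X) {f : ℝ → ℝ → ℝ} (hf : ∀ θ x, 0 ≤ f θ x) (hfm : ∀ θ, Measurable (f θ))
    (hMLR : ∀ θ' θ'' : ℝ, θ' < θ'' → ∀ x₁ x₂ : ℝ, x₁ < x₂ →
      f θ'' x₁ * f θ' x₂ ≤ f θ'' x₂ * f θ' x₁) {θ : ℝ} (hθ : θ ≠ 0)
    (hlaw : μ.map X = volume.withDensity fun t => ENNReal.ofReal (f θ t)) {a c : ℝ}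
    (ha₀ : 0 ≤ a) (ha₁ : a ≤ 1)
    (htail : (volume.withDensity fun t => ENNReal.ofReal (f 0 t))
      {x | Real.sign θ * x < -c} = ENNReal.ofReal (a / 2))
    (hbody : (volume.withDensity fun t => ENNReal.ofReal (f 0 t))
      {x | -c ≤ Real.sign θ * x ∧ Real.sign θ * x < c} = ENNReal.ofReal (1 - a)) :
    μ.real {ω | Real.sign θ * X ω < -c} * (1 - a) ≤
      a / 2 * μ.real {ω | -c ≤ Real.sign θ * X ω ∧ Real.sign θ * X ω < c} := by
  have hσ : Measurable fun x : ℝ => Real.sign θ * x := measurable_const.mul measurable_id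
  have hP : MeasurableSet {x : ℝ | Real.sign θ * x < -c} := measurableSet_lt hσ measurable_const
  have hQ : MeasurableSet {x : ℝ | -c ≤ Real.sign θ * x ∧ Real.sign θ * x < c} :=
    (measurableSet_le measurable_const hσ).inter (measurableSet_lt hσ measurable_const)
  have key := withDensity_mul_withDensity_le (μ := volume) (hfm θ).ennreal_ofReal
    (hfm 0).ennreal_ofReal hP hQ
    fun p hp q hq => ofReal_mul_le_of_sign_mul_lt hf hMLR hθ (hp.trans_le hq.1)
  rw [← hlaw, htail, hbody, Measure.map_apply hX hP, Measure.map_apply hX hQ] at key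
  have := ENNReal.toReal_mono (ENNReal.mul_ne_top ENNReal.ofReal_ne_top (measure_ne_top _ _)) key
  rwa [ENNReal.toReal_mul, ENNReal.toReal_mul, ENNReal.toReal_ofReal (by linarith),
    ENNReal.toReal_ofReal (by linarith)] at this

theorem measureReal_inter_le_of_mul_le [IsFiniteMeasure μ] {G W V : Set Ω}
    (hG : MeasurableSet G) (hW : MeasurableSet W) (hWV : W ⊆ V) {ρ : ℝ} (hρ : 0 ≤ ρ)
    (hcorr : μ.real (G ∩ W) * μ.real V ≤ μ.real (G ∩ V) * μ.real W)
    (hmarg : μ.real W ≤ ρ * μ.real (V \ W)) :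
    μ.real (G ∩ W) ≤ ρ * μ.real (G ∩ (V \ W)) := by
  have hV : μ.real (V \ W) = μ.real V - μ.real W := measureReal_sdiff hWV hW
  have hGV : μ.real (G ∩ (V \ W)) = μ.real (G ∩ V) - μ.real (G ∩ W) := by
    rw [inter_sdiff_distrib_left, measureReal_sdiff (inter_subset_inter_right _ hWV) (hG.inter hW)]
  have hGW : μ.real (G ∩ W) ≤ μ.real W := measureReal_mono inter_subset_right
  have hx : 0 ≤ μ.real (G ∩ (V \ W)) := measureReal_nonneg
  rcases (measureReal_nonneg : 0 ≤ μ.real (V \ W)).eq_or_lt with hM | hM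
  · -- `hmarg` makes `W`, hence `G ∩ W`, null
    nlinarith
  · have hcross : μ.real (G ∩ W) * μ.real (V \ W) ≤ μ.real (G ∩ (V \ W)) * μ.real W := by
      rw [hV, hGV]; linarith
    refine le_of_mul_le_mul_right ?_ hM
    nlinarith [mul_le_mul_of_nonneg_left hmarg hx]

theorem setIntegral_mul_le_of_div_le [IsFiniteMeasure μ] {W V : Set Ω} (hWV : W ⊆ V)
    {φ : Ω → ℝ} (h : μ W ≠ 0 → μ V ≠ 0 →
      (∫ ω in W, φ ω ∂μ) / μ.real W ≤ (∫ ω in V, φ ω ∂μ) / μ.real V) :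
    (∫ ω in W, φ ω ∂μ) * μ.real V ≤ (∫ ω in V, φ ω ∂μ) * μ.real W := by
  by_cases hW : μ W = 0
  · simp [Measure.restrict_eq_zero.2 hW, measureReal_def, hW]
  have hV : μ V ≠ 0 := fun h0 => hW (measure_mono_null hWV h0)
  exact (div_le_div_iff₀ (ENNReal.toReal_pos hW (measure_ne_top _ _))
    (ENNReal.toReal_pos hV (measure_ne_top _ _))).1 (h hW hV)

theorem measureReal_preimage_inter_mul_le [IsFiniteMeasure μ] {ι : Type*} {S : ι → Ω → ℝ}
    (hS : ∀ i, Measurable (S i)) (k : ι)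
    (hPRD : ∀ φ : (ι → ℝ) → ℝ, Measurable φ → Monotone φ → (∃ C, ∀ x, |φ x| ≤ C) →
      ∀ u u' : ℝ, u ≤ u' →
        μ {ω | S k ω < u} ≠ 0 → μ {ω | S k ω < u'} ≠ 0 →
          (∫ ω in {ω | S k ω < u}, φ (fun i => S i ω) ∂μ) / μ.real {ω | S k ω < u}
            ≤ (∫ ω in {ω | S k ω < u'}, φ (fun i => S i ω) ∂μ) / μ.real {ω | S k ω < u'})
    {U : Set (ι → ℝ)} (hU : MeasurableSet U) (hUup : IsUpperSet U) {u u' : ℝ} (hu : u ≤ u') :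
    μ.real ((fun ω i => S i ω) ⁻¹' U ∩ {ω | S k ω < u}) * μ.real {ω | S k ω < u'} ≤
      μ.real ((fun ω i => S i ω) ⁻¹' U ∩ {ω | S k ω < u'}) * μ.real {ω | S k ω < u} := by
  have hvec : Measurable fun ω i => S i ω := measurable_pi_lambda _ hS
  have hint : ∀ v : ℝ, ∫ ω in {ω | S k ω < v}, U.indicator 1 (fun i => S i ω) ∂μ =
      μ.real ((fun ω i => S i ω) ⁻¹' U ∩ {ω | S k ω < v}) := fun v =>
    (integral_indicator_one (hvec hU)).trans (measureReal_restrict_apply (hvec hU))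
  have hmono : Monotone (U.indicator (1 : (ι → ℝ) → ℝ)) := fun x y hxy => by
    by_cases hx : x ∈ U
    · simp [hx, hUup hxy hx]
    · simp only [indicator_of_notMem hx]; exact indicator_nonneg (fun _ _ => zero_le_one) y
  have hbdd : ∃ C, ∀ x, |U.indicator (1 : (ι → ℝ) → ℝ) x| ≤ C :=
    ⟨1, fun x => by by_cases hx : x ∈ U <;> simp [hx]⟩
  have := setIntegral_mul_le_of_div_le (μ := μ) (W := {ω | S k ω < u})
    (V := {ω | S k ω < u'}) (fun ω (h : S k ω < u) => h.trans_le hu)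
    (hPRD (U.indicator 1) (measurable_const.indicator hU) hmono hbdd u u' hu)
  rwa [hint, hint] at this

theorem measureReal_exists_first_wrong_sign_le [IsProbabilityMeasure μ] {ι : Type*} [Fintype ι]
    [LinearOrder ι]
    {S : ι → Ω → ℝ} (hS : ∀ i, Measurable (S i)) {c ρ : ℝ} (hc : 0 ≤ c) (hρ : 0 ≤ ρ)
    (hprd : ∀ k, ∀ U : Set (ι → ℝ), MeasurableSet U → IsUpperSet U →
      μ.real ((fun ω i => S i ω) ⁻¹' U ∩ {ω | S k ω < -c}) * μ.real {ω | S k ω < c} ≤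
        μ.real ((fun ω i => S i ω) ⁻¹' U ∩ {ω | S k ω < c}) * μ.real {ω | S k ω < -c})
    (hmarg : ∀ k, μ.real {ω | S k ω < -c} ≤ ρ * μ.real {ω | -c ≤ S k ω ∧ S k ω < c})
    (hatom : ∀ k, μ {ω | S k ω = -c} = 0) :
    μ.real {ω | ∃ k, (∀ j < k, c ≤ S j ω) ∧ S k ω ≤ -c} ≤ ρ := by
  set U : ι → Set (ι → ℝ) := fun k => {x | ∀ j < k, c ≤ x j}
  have hU : ∀ k, MeasurableSet (U k) := fun k => by
    simp only [U, ofPred_forall]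
    exact .iInter fun j => .iInter fun _ =>
      measurableSet_le measurable_const (measurable_pi_apply j)
  have hUup : ∀ k, IsUpperSet (U k) := fun k x y hxy hx j hj => (hx j hj).trans (hxy j)
  set G : ι → Set Ω := fun k => (fun ω i => S i ω) ⁻¹' U k
  have hG : ∀ k, MeasurableSet (G k) := fun k => measurable_pi_lambda _ hS (hU k)
  set A : ι → Set Ω := fun k => G k ∩ ({ω | S k ω < c} \ {ω | S k ω < -c})
  have hstep : ∀ k, μ.real (G k ∩ {ω | S k ω ≤ -c}) ≤ ρ * μ.real (A k) := fun k => by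
    have hae : (G k ∩ {ω | S k ω ≤ -c} : Set Ω) ≤ᵐ[μ] (G k ∩ {ω | S k ω < -c} : Set Ω) := by
      filter_upwards [measure_eq_zero_iff_ae_notMem.1 (hatom k)] with ω hω hmem
      exact ⟨hmem.1, lt_of_le_of_ne hmem.2 hω⟩
    have hWV : {ω | S k ω < -c} ⊆ {ω | S k ω < c} := fun ω (h : S k ω < -c) =>
      show S k ω < c by linarith
    refine (ENNReal.toReal_mono (measure_ne_top _ _) (measure_mono_ae hae)).trans
      (measureReal_inter_le_of_mul_le (hG k) (measurableSet_lt (hS k) measurable_const) hWV hρ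
      (hprd k _ (hU k) (hUup k)) ((hmarg k).trans_eq ?_))
    congr 2; ext ω; simp [and_comm]
  have hdisj : Pairwise (Function.onFun Disjoint A) := by
    intro k k' hne
    wlog hlt : k < k' generalizing k k'
    · exact (this hne.symm ((Ne.symm hne).lt_of_le (not_lt.1 hlt))).symm
    exact disjoint_left.2 fun ω hk hk' => absurd (hk'.1 k hlt) (not_le.2 hk.2.1)
  have hA : ∀ k, MeasurableSet (A k) := fun k => (hG k).inter
    ((measurableSet_lt (hS k) measurable_const).diff (measurableSet_lt (hS k) measurable_const))
  calc μ.real {ω | ∃ k, (∀ j < k, c ≤ S j ω) ∧ S k ω ≤ -c}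
      = μ.real (⋃ k, G k ∩ {ω | S k ω ≤ -c}) := by congr 1; ext ω; simp [G, U]
    _ ≤ ∑ k, μ.real (G k ∩ {ω | S k ω ≤ -c}) := measureReal_iUnion_fintype_le _
    _ ≤ ∑ k, ρ * μ.real (A k) := Finset.sum_le_sum fun k _ => hstep k
    _ = ρ * μ.real (⋃ k, A k) := by rw [← Finset.mul_sum, measureReal_iUnion_fintype hdisj hA]
    _ ≤ ρ := mul_le_of_le_one_right hρ measureReal_le_one

theorem measureReal_exists_first_zero_le [IsFiniteMeasure μ] {ι : Type*} [LinearOrder ι] {θ : ι → ℝ}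
    {R : ι → Set Ω} {a : ℝ} (ha : 0 ≤ a) (hR : ∀ i, θ i = 0 → μ.real (R i) ≤ a) :
    μ.real {ω | ∃ i, θ i = 0 ∧ (∀ j < i, θ j ≠ 0) ∧ ω ∈ R i} ≤ a := by
  by_cases h : ∃ m, θ m = 0 ∧ ∀ j < m, θ j ≠ 0
  · obtain ⟨m, hm0, hmprev⟩ := h
    refine (measureReal_mono fun ω hω => ?_).trans (hR m hm0)
    obtain ⟨i, hi0, hiprev, hω⟩ := hω
    rcases lt_trichotomy i m with him | rfl | hmi
    · exact absurd hi0 (hmprev i him)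
    · exact hω
    · exact absurd hm0 (hiprev m hmi)
  · push Not at h
    have hempty : {ω | ∃ i, θ i = 0 ∧ (∀ j < i, θ j ≠ 0) ∧ ω ∈ R i} = ∅ :=
      eq_empty_iff_forall_notMem.2 fun ω ⟨i, hi0, hiprev, _⟩ => by
        obtain ⟨j, hj, hj0⟩ := h i hi0
        exact hiprev j hj hj0
    rw [hempty, measureReal_empty]
    exact ha

theorem measure_sign_mul_eq_zero_s16 {X : Ω → ℝ} (hX : Measurable X) [NullSingletonClass (μ.map X)]
    {θ : ℝ} (hθ : θ ≠ 0) (y : ℝ) :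
    μ {ω | Real.sign θ * X ω = y} = 0 := by
  have hσ : Real.sign θ ≠ 0 := fun h => hθ (Real.sign_eq_zero_iff.1 h)
  have hset : {ω | Real.sign θ * X ω = y} = X ⁻¹' {y / Real.sign θ} := by
    ext ω; simp [eq_div_iff hσ, mul_comm]
  rw [hset, ← Measure.map_apply hX (measurableSet_singleton _), measure_singleton]

end Probability

theorem add_div_two_mul_one_sub_le {a : ℝ} (ha₀ : 0 < a) (ha : a ≤ 1 / 2) :
    a + a / (2 * (1 - a)) ≤ 2 * a := by
  have : a / (2 * (1 - a)) ≤ a := by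
    rw [div_le_iff₀ (by linarith)]; nlinarith
  linarith

-- `2 * min (F₀ t) (1 - F₀ t)` is the two-sided p-value of `t`; `a` is the common critical constant.
def directionalErrorEvent {Ω : Type*} {n : ℕ} (F₀ : ℝ → ℝ) (θ : Fin n → ℝ)
    (T : Fin n → Ω → ℝ) (a : ℝ) : Set Ω :=
  {ω | ∃ i : Fin n, (∀ j : Fin n, j ≤ i → 2 * min (F₀ (T j ω)) (1 - F₀ (T j ω)) ≤ a) ∧
    (θ i = 0 ∨ (θ i ≠ 0 ∧ θ i * T i ω < 0))}

theorem measureReal_directionalErrorEvent_le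
    {Ω : Type*} [MeasurableSpace Ω] (Pr : Measure Ω) [IsProbabilityMeasure Pr]
    (F : ℝ → ℝ → ℝ) (hF₀cont : Continuous (F 0)) (hF₀strict : StrictMono (F 0))
    (hF₀sym : ∀ x : ℝ, F 0 (-x) = 1 - F 0 x)
    (f : ℝ → ℝ → ℝ) (hf_nonneg : ∀ θ' x, 0 ≤ f θ' x) (hf_meas : ∀ θ', Measurable (f θ'))
    (hf_cdf : ∀ θ' x, F θ' x = ∫ t in Set.Iic x, f θ' t)
    (hMLR : ∀ θ' θ'' : ℝ, θ' < θ'' → ∀ x₁ x₂ : ℝ, x₁ < x₂ →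
      f θ'' x₁ * f θ' x₂ ≤ f θ'' x₂ * f θ' x₁)
    {n : ℕ} (θ : Fin n → ℝ) (T : Fin n → Ω → ℝ) (hT : ∀ i, Measurable (T i))
    (hcdf : ∀ i x, (Pr {ω | T i ω ≤ x}).toReal = F (θ i) x)
    (hPRD : ∀ k : {i : Fin n // θ i ≠ 0},
      ∀ φ : ({i : Fin n // θ i ≠ 0} → ℝ) → ℝ,
      Measurable φ → Monotone φ → (∃ C, ∀ x, |φ x| ≤ C) →
      ∀ u u' : ℝ, u ≤ u' →
        Pr {ω | Real.sign (θ k.1) * T k.1 ω < u} ≠ 0 →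
        Pr {ω | Real.sign (θ k.1) * T k.1 ω < u'} ≠ 0 →
          (∫ ω in {ω | Real.sign (θ k.1) * T k.1 ω < u},
              φ (fun i => Real.sign (θ i.1) * T i.1 ω) ∂Pr)
              / (Pr {ω | Real.sign (θ k.1) * T k.1 ω < u}).toReal
            ≤ (∫ ω in {ω | Real.sign (θ k.1) * T k.1 ω < u'},
              φ (fun i => Real.sign (θ i.1) * T i.1 ω) ∂Pr)
              / (Pr {ω | Real.sign (θ k.1) * T k.1 ω < u'}).toReal)
    {a : ℝ} (ha : a ∈ Ioo (0 : ℝ) 1) :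
    Pr.real (directionalErrorEvent (F 0) θ T a) ≤ a + a / (2 * (1 - a)) := by
  obtain ⟨ha₀, ha₁⟩ := ha
  have hF₀bot : Tendsto (F 0) atBot (𝓝 0) :=
    (tendsto_integral_Iic_zero tendsto_id).congr fun x => (hf_cdf 0 x).symm
  have hF₀top := tendsto_atTop_one_of_symm_s16 hF₀bot hF₀sym
  set ν₀ := volume.withDensity fun t => ENNReal.ofReal (f 0 t)
  have := isProbabilityMeasure_withDensity_ofReal (hf_nonneg 0) (hf_cdf 0) hF₀top
  have hν₀ : ∀ x, ν₀.real (Iic x) = F 0 x := fun x => by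
    rw [measureReal_def, withDensity_ofReal_Iic (hf_nonneg 0) (hf_cdf 0) hF₀top,
      ENNReal.toReal_ofReal ((hf_cdf 0 x).symm ▸
        setIntegral_nonneg measurableSet_Iic fun t _ => hf_nonneg 0 t)]
  obtain ⟨c, hc, hc₁⟩ := exists_pos_eq_div_two_of_symm hF₀cont hF₀strict hF₀sym hF₀bot ⟨ha₀, ha₁⟩
  have hc₂ : F 0 c = 1 - a / 2 := by linarith [hF₀sym c]
  have hlaw : ∀ i, Pr.map (T i) = volume.withDensity fun t => ENNReal.ofReal (f (θ i) t) :=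
    fun i => map_eq_withDensity_ofReal (hT i) (hf_nonneg _) fun x => (hcdf i x).trans (hf_cdf _ x)
  set S : {i // θ i ≠ 0} → Ω → ℝ := fun k ω => Real.sign (θ k) * T k ω
  have hSm : ∀ k, Measurable (S k) := fun k => (hT k).const_mul _
  have hsub : directionalErrorEvent (F 0) θ T a ⊆
      {ω | ∃ i, θ i = 0 ∧ (∀ j < i, θ j ≠ 0) ∧ ω ∈ {ω | c ≤ |T i ω|}} ∪
        {ω | ∃ k, (∀ j < k, c ≤ S j ω) ∧ S k ω ≤ -c} := fun ω ⟨i, hrej, herr⟩ =>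
    exists_first_true_null_or_wrong_sign
      ⟨i, fun j hj => le_abs_of_twoSidedPValue_le hF₀strict hF₀sym hc₁ (hrej j hj), herr⟩
  have hnull : Pr.real {ω | ∃ i, θ i = 0 ∧ (∀ j < i, θ j ≠ 0) ∧ ω ∈ {ω | c ≤ |T i ω|}} ≤ a :=
    measureReal_exists_first_zero_le ha₀.le fun i hi => by
      have := map_measureReal_apply (μ := Pr) (hT i)
        (measurableSet_le measurable_const continuous_abs.measurable) (s := {x | c ≤ |x|})
      rw [hlaw i, hi, measureReal_setOf_le_abs hν₀ hc.le, hc₁, hc₂] at this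
      exact (this.symm.trans (by ring)).le
  have hfalse : Pr.real {ω | ∃ k, (∀ j < k, c ≤ S j ω) ∧ S k ω ≤ -c} ≤ a / (2 * (1 - a)) := by
    refine measureReal_exists_first_wrong_sign_le hSm hc.le (div_nonneg ha₀.le (by linarith))
      (fun k U hU hUup => measureReal_preimage_inter_mul_le hSm k (hPRD k) hU hUup (by linarith))
      (fun k => ?_) (fun k => ?_)
    · have hmlr := measureReal_sign_mul_lt_mul_le_of_mlr (hT k) hf_nonneg hf_meas hMLR k.2
        (hlaw k) ha₀.le ha₁.le (c := c)
        (by rw [← ofReal_measureReal, measureReal_setOf_sign_mul_lt_neg hν₀ hF₀sym k.2 c, hc₁])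
        (by rw [← ofReal_measureReal, measureReal_setOf_sign_mul_mem_Ico hν₀ k.2 hc.le, hc₁, hc₂]
            ring_nf)
      rw [div_mul_eq_mul_div, le_div_iff₀ (by linarith)]
      linarith
    · have : NullSingletonClass (Pr.map (T k)) := by rw [hlaw k]; infer_instance
      exact measure_sign_mul_eq_zero_s16 (hT k) k.2 (-c)
  exact (measureReal_mono hsub).trans ((measureReal_union_le _ _).trans (add_le_add hnull hfalse))

theorem procedure2_mdFWER_le_two_alpha_no_indep_general
    {Ω : Type*} [MeasurableSpace Ω] (Pr : Measure Ω) [IsProbabilityMeasure Pr]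
    (F : ℝ → ℝ → ℝ)
    (hFcont : ∀ θ', Continuous (F θ'))
    (hF0strict : StrictMono (F 0))
    (hFsym : ∀ x : ℝ, F 0 (-x) = 1 - F 0 x)
    -- MLR assumption (Assumption 2)
    (f : ℝ → ℝ → ℝ)
    (hf_nonneg : ∀ θ' x, 0 ≤ f θ' x)
    (hf_meas : ∀ θ', Measurable (f θ'))
    (hf_cdf : ∀ θ' x, F θ' x = ∫ t in Set.Iic x, f θ' t)
    (hMLR : ∀ θ' θ'' : ℝ, θ' < θ'' → ∀ x₁ x₂ : ℝ, x₁ < x₂ →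
      f θ'' x₁ * f θ' x₂ ≤ f θ'' x₂ * f θ' x₁)
    (n : ℕ) (θ : Fin n → ℝ)
    (T : Fin n → Ω → ℝ) (hT : ∀ i, Measurable (T i))
    (hcdf : ∀ i x, (Pr {ω | T i ω ≤ x}).toReal = F (θ i) x)
    -- Assumption 3: positive regression dependence of the signed false-null statistics
    (hPRD : ∀ k : {i : Fin n // θ i ≠ 0},
      ∀ φ : ({i : Fin n // θ i ≠ 0} → ℝ) → ℝ,
      Measurable φ → Monotone φ → (∃ C, ∀ x, |φ x| ≤ C) →
      ∀ u u' : ℝ, u ≤ u' →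
        (Pr {ω | u ≤ Real.sign (θ k.1) * T k.1 ω} ≠ 0 →
         Pr {ω | u' ≤ Real.sign (θ k.1) * T k.1 ω} ≠ 0 →
          (∫ ω in {ω | u ≤ Real.sign (θ k.1) * T k.1 ω},
              φ (fun i => Real.sign (θ i.1) * T i.1 ω) ∂Pr)
              / (Pr {ω | u ≤ Real.sign (θ k.1) * T k.1 ω}).toReal
            ≤ (∫ ω in {ω | u' ≤ Real.sign (θ k.1) * T k.1 ω},
              φ (fun i => Real.sign (θ i.1) * T i.1 ω) ∂Pr)
              / (Pr {ω | u' ≤ Real.sign (θ k.1) * T k.1 ω}).toReal) ∧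
        (Pr {ω | Real.sign (θ k.1) * T k.1 ω < u} ≠ 0 →
         Pr {ω | Real.sign (θ k.1) * T k.1 ω < u'} ≠ 0 →
          (∫ ω in {ω | Real.sign (θ k.1) * T k.1 ω < u},
              φ (fun i => Real.sign (θ i.1) * T i.1 ω) ∂Pr)
              / (Pr {ω | Real.sign (θ k.1) * T k.1 ω < u}).toReal
            ≤ (∫ ω in {ω | Real.sign (θ k.1) * T k.1 ω < u'},
              φ (fun i => Real.sign (θ i.1) * T i.1 ω) ∂Pr)
              / (Pr {ω | Real.sign (θ k.1) * T k.1 ω < u'}).toReal))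
    (α : ℝ) (hα : α ∈ Set.Ioo (0 : ℝ) 1) :
    (Pr {ω | ∃ i : Fin n,
        (∀ j : Fin n, j ≤ i →
          2 * min (F 0 (T j ω)) (1 - F 0 (T j ω)) ≤ α) ∧
        (θ i = 0 ∨ (θ i ≠ 0 ∧ θ i * T i ω < 0))}).toReal ≤ 2 * α
    ∧
    (Pr {ω | ∃ i : Fin n,
        (∀ j : Fin n, j ≤ i →
          2 * min (F 0 (T j ω)) (1 - F 0 (T j ω)) ≤ α / 2) ∧
        (θ i = 0 ∨ (θ i ≠ 0 ∧ θ i * T i ω < 0))}).toReal ≤ α := by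
  obtain ⟨hα₀, hα₁⟩ := hα
  have bound := fun (a : ℝ) (ha : a ∈ Set.Ioo (0 : ℝ) 1) =>
    measureReal_directionalErrorEvent_le Pr F (hFcont 0) hF0strict hFsym f hf_nonneg hf_meas
      hf_cdf hMLR θ T hT hcdf (fun k φ hφ hmono hbdd u u' hu => (hPRD k φ hφ hmono hbdd u u' hu).2)
      ha
  refine ⟨?_, ?_⟩
  · rcases le_or_gt α (1 / 2) with h | h
    · exact (bound α ⟨hα₀, hα₁⟩).trans (add_div_two_mul_one_sub_le hα₀ h)
    · exact measureReal_le_one.trans (by linarith)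
  · refine (bound (α / 2) ⟨by linarith, by linarith⟩).trans ?_
    linarith [add_div_two_mul_one_sub_le (a := α / 2) (by linarith) (by linarith)]

/-- Remark 3: Under MLR (Assumption 2) and positive regression
dependence of the signed false-null statistics (Assumption 3), with no assumption on
the dependence between true-null and false-null statistics, Procedure 2 satisfies
mdFWER ≤ 2α; consequently the directional fixed sequence procedure with common
critical constant α/2 satisfies mdFWER ≤ α. -/
theorem procedure2_mdFWER_le_two_alpha_no_indep
    {Ω : Type*} [MeasurableSpace Ω] (Pr : Measure Ω) [IsProbabilityMeasure Pr]
    (F : ℝ → ℝ → ℝ)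
    (hFcont : ∀ θ', Continuous (F θ'))
    (hFmono : ∀ θ', Monotone (F θ'))
    (hF0strict : StrictMono (F 0))
    (hFsym : ∀ x : ℝ, F 0 (-x) = 1 - F 0 x)
    (hstoch : ∀ θ' θ'' : ℝ, θ' ≤ θ'' → ∀ x, F θ'' x ≤ F θ' x)
    -- MLR assumption (Assumption 2)
    (f : ℝ → ℝ → ℝ)
    (hf_nonneg : ∀ θ' x, 0 ≤ f θ' x)
    (hf_meas : ∀ θ', Measurable (f θ'))
    (hf_cdf : ∀ θ' x, F θ' x = ∫ t in Set.Iic x, f θ' t)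
    (hMLR : ∀ θ' θ'' : ℝ, θ' < θ'' → ∀ x₁ x₂ : ℝ, x₁ < x₂ →
      f θ'' x₁ * f θ' x₂ ≤ f θ'' x₂ * f θ' x₁)
    (n : ℕ) (θ : Fin n → ℝ)
    (T : Fin n → Ω → ℝ) (hT : ∀ i, Measurable (T i))
    (hcdf : ∀ i x, (Pr {ω | T i ω ≤ x}).toReal = F (θ i) x)
    -- Assumption 3: positive regression dependence of the signed false-null statistics
    (hPRD : ∀ k : {i : Fin n // θ i ≠ 0},
      ∀ φ : ({i : Fin n // θ i ≠ 0} → ℝ) → ℝ,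
      Measurable φ → Monotone φ → (∃ C, ∀ x, |φ x| ≤ C) →
      ∀ u u' : ℝ, u ≤ u' →
        (Pr {ω | u ≤ Real.sign (θ k.1) * T k.1 ω} ≠ 0 →
         Pr {ω | u' ≤ Real.sign (θ k.1) * T k.1 ω} ≠ 0 →
          (∫ ω in {ω | u ≤ Real.sign (θ k.1) * T k.1 ω},
              φ (fun i => Real.sign (θ i.1) * T i.1 ω) ∂Pr)
              / (Pr {ω | u ≤ Real.sign (θ k.1) * T k.1 ω}).toReal
            ≤ (∫ ω in {ω | u' ≤ Real.sign (θ k.1) * T k.1 ω},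
              φ (fun i => Real.sign (θ i.1) * T i.1 ω) ∂Pr)
              / (Pr {ω | u' ≤ Real.sign (θ k.1) * T k.1 ω}).toReal) ∧
        (Pr {ω | Real.sign (θ k.1) * T k.1 ω < u} ≠ 0 →
         Pr {ω | Real.sign (θ k.1) * T k.1 ω < u'} ≠ 0 →
          (∫ ω in {ω | Real.sign (θ k.1) * T k.1 ω < u},
              φ (fun i => Real.sign (θ i.1) * T i.1 ω) ∂Pr)
              / (Pr {ω | Real.sign (θ k.1) * T k.1 ω < u}).toReal
            ≤ (∫ ω in {ω | Real.sign (θ k.1) * T k.1 ω < u'},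
              φ (fun i => Real.sign (θ i.1) * T i.1 ω) ∂Pr)
              / (Pr {ω | Real.sign (θ k.1) * T k.1 ω < u'}).toReal))
    (α : ℝ) (hα : α ∈ Set.Ioo (0 : ℝ) 1) :
    (Pr {ω | ∃ i : Fin n,
        (∀ j : Fin n, j ≤ i →
          2 * min (F 0 (T j ω)) (1 - F 0 (T j ω)) ≤ α) ∧
        (θ i = 0 ∨ (θ i ≠ 0 ∧ θ i * T i ω < 0))}).toReal ≤ 2 * α
    ∧
    (Pr {ω | ∃ i : Fin n,
        (∀ j : Fin n, j ≤ i →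
          2 * min (F 0 (T j ω)) (1 - F 0 (T j ω)) ≤ α / 2) ∧
        (θ i = 0 ∨ (θ i ≠ 0 ∧ θ i * T i ω < 0))}).toReal ≤ α :=
  procedure2_mdFWER_le_two_alpha_no_indep_general Pr F hFcont hF0strict hFsym f hf_nonneg hf_meas
    hf_cdf hMLR n θ T hT hcdf hPRD α hα
end

section
/- Let n = 2. Suppose the family {F_θ} satisfies the MLR assumption (Assumption 2) and T_1 and T_2 are positively regression dependent in the sense that for every bounded measurable nondecreasing φ : ℝ → ℝ and all u ≤ u′ for which the conditioning events have positive probability, E[φ(T_1) | T_2 ≥ u] ≤ E[φ(T_1) | T_2 ≥ u′] and E[φ(T_1) | T_2 < u] ≤ E[φ(T_1) | T_2 < u′] (Assumption 5). Then Procedure 2 (both critical constants equal to α) satisfies mdFWER ≤ α for every configuration of parameters (θ_1, θ_2) ∈ ℝ². -/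
/-!
With `F₀ c = 1 - α/2`, a test rejects iff its statistic lies outside `(-c, c)`, and an error is
made iff `T₁` lies in the error region `E(θ₁)` (rejections that are type 1 or type 3 errors), or
`H₁` is rejected and `T₂ ∈ E(θ₂)`. If `θ₁ = 0` this is contained in the rejection of `H₁`, of
probability `α`; if `θ₁, θ₂ ≠ 0` it is contained in the union of two wrong-sign rejections, each of
probability at most `α/2` by stochastic monotonicity.

In the remaining case, say `θ₁ > 0 = θ₂`, let `a = α/2`, `q = P(T₁ ≤ -c)`,
`x₁ = P(T₁ ≥ c, T₂ ≤ -c)` and `x₂ = P(T₁ ≥ c, T₂ ≥ c) ≤ a`. MLR, comparing the laws of `T₁` and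
`T₂` on `(-∞, -c]` and `(-c, c)`, gives `q (1 - 2a) ≤ a P(-c < T₁ < c)`, and positive regression
dependence gives `P(T₁ ≥ c | T₂ < -c) ≤ P(T₁ ≥ c | T₂ < c)`, i.e.
`x₁ (1 - a) ≤ a P(T₁ ≥ c, T₂ < c)`. Adding, `(q + x₁)(1 - a) ≤ a (1 - x₂)`, hence
`q + x₁ + x₂ ≤ 2a = α`. The case `θ₁ < 0 = θ₂` is the mirror image.
-/

open MeasureTheory ProbabilityTheory Set Filter
open scoped ENNReal

noncomputable section

section RandomVariables

variable {Ω : Type*} [MeasurableSpace Ω] {Pr : Measure Ω} {T : Ω → ℝ}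

lemma cdf_map_eq_s17 [IsProbabilityMeasure Pr] {G : ℝ → ℝ} (hT : Measurable T)
    (hG : ∀ x, Pr.real (T ⁻¹' Iic x) = G x) : ⇑(cdf (Pr.map T)) = G := by
  have := Measure.isProbabilityMeasure_map (μ := Pr) hT.aemeasurable
  funext x
  rw [cdf_eq_real, map_measureReal_apply hT measurableSet_Iic, hG]

lemma integrableOn_Iic_of_measureReal_preimage_Iic_eq [IsProbabilityMeasure Pr] {g : ℝ → ℝ}
    (hT : Measurable T) (hcdf : ∀ x, Pr.real (T ⁻¹' Iic x) = ∫ t in Iic x, g t) (x : ℝ) :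
    IntegrableOn g (Iic x) := by
  by_contra hx
  have htend := cdf_map_eq_s17 hT hcdf ▸ tendsto_cdf_atTop (μ := Pr.map T)
  obtain ⟨y, hy, hxy⟩ := ((htend.eventually_const_lt one_pos).and (eventually_ge_atTop x)).exists
  exact hy.ne' (integral_undef fun h => hx (IntegrableOn.mono_set h (Iic_subset_Iic.2 hxy)))

lemma map_eq_withDensity_of_measureReal_preimage_Iic_eq [IsProbabilityMeasure Pr] {g : ℝ → ℝ}
    (hT : Measurable T) (hg : ∀ t, 0 ≤ g t)
    (hcdf : ∀ x, Pr.real (T ⁻¹' Iic x) = ∫ t in Iic x, g t) :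
    Pr.map T = volume.withDensity fun t => ENNReal.ofReal (g t) :=
  Measure.ext_of_Iic _ _ fun x => by
    rw [withDensity_apply _ measurableSet_Iic,
      ← ofReal_integral_eq_lintegral_ofReal
        (integrableOn_Iic_of_measureReal_preimage_Iic_eq hT hcdf x) (ae_of_all _ hg),
      ← hcdf x, measureReal_def, ENNReal.ofReal_toReal (measure_ne_top _ _),
      Measure.map_apply hT measurableSet_Iic]

lemma measureReal_preimage_inter_congr {β : Type*} [MeasurableSpace β] {X : Ω → β}
    {S S' : Set β} (hX : Measurable X) (h : S =ᵐ[Pr.map X] S') (A : Set Ω) :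
    Pr.real (X ⁻¹' S ∩ A) = Pr.real (X ⁻¹' S' ∩ A) :=
  measureReal_congr ((ae_eq_comp hX.aemeasurable h).inter (ae_eq_refl A))

lemma measureReal_preimage_Ici_eq_one_sub [IsProbabilityMeasure Pr] [NullSingletonClass (Pr.map T)]
    (hT : Measurable T) (x : ℝ) :
    Pr.real (T ⁻¹' Ici x) = 1 - Pr.real (T ⁻¹' Iic x) := by
  simpa [← compl_Iic, probReal_compl_eq_one_sub (hT measurableSet_Iic)] using
    measureReal_preimage_inter_congr hT (Ioi_ae_eq_Ici (μ := Pr.map T) (a := x)).symm univ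

lemma measureReal_preimage_Ioo_eq [IsProbabilityMeasure Pr] (hT : Measurable T) {a b : ℝ}
    (hab : a < b) :
    Pr.real (T ⁻¹' Ioo a b) = 1 - Pr.real (T ⁻¹' Iic a) - Pr.real (T ⁻¹' Ici b) := by
  have hIoo : T ⁻¹' Ioo a b = (T ⁻¹' Iic a ∪ T ⁻¹' Ici b)ᶜ := by
    ext ω; simp
  rw [hIoo, probReal_compl_eq_one_sub ((hT measurableSet_Iic).union (hT measurableSet_Ici)),
    measureReal_union ((Iic_disjoint_Ici.2 (not_le.2 hab)).preimage T) (hT measurableSet_Ici)]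
  ring

end RandomVariables

section LikelihoodRatio

/-- `ν ≤ μ` in the likelihood-ratio order; for measures with densities this says that `dμ/dν`
is nondecreasing. -/
def LikelihoodRatioLE (ν μ : Measure ℝ) : Prop :=
  ∀ ⦃I J : Set ℝ⦄, MeasurableSet I → MeasurableSet J → (∀ x ∈ I, ∀ y ∈ J, x < y) →
    μ I * ν J ≤ μ J * ν I

lemma likelihoodRatioLE_withDensity {g h : ℝ → ℝ≥0∞} (hg : Measurable g) (hh : Measurable h)
    (hgh : ∀ x y, x < y → g x * h y ≤ g y * h x) :
    LikelihoodRatioLE (volume.withDensity h) (volume.withDensity g) := by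
  intro I J hI hJ hIJ
  rw [withDensity_apply _ hI, withDensity_apply _ hJ, withDensity_apply _ hI,
    withDensity_apply _ hJ]
  calc (∫⁻ x in I, g x) * ∫⁻ y in J, h y
      = ∫⁻ x in I, ∫⁻ y in J, g x * h y := by
        rw [← lintegral_mul_const _ hg]
        exact lintegral_congr fun x => (lintegral_const_mul _ hh).symm
    _ ≤ ∫⁻ x in I, ∫⁻ y in J, g y * h x :=
        setLIntegral_mono' hI fun x hx =>
          setLIntegral_mono' hJ fun y hy => hgh x y (hIJ x hx y hy)
    _ = (∫⁻ y in J, g y) * ∫⁻ x in I, h x := by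
        rw [← lintegral_const_mul _ hh]
        exact lintegral_congr fun x => lintegral_mul_const _ hg

lemma likelihoodRatioLE_withDensity_ofReal {g h : ℝ → ℝ} (hg : Measurable g) (hh : Measurable h)
    (hg₀ : ∀ x, 0 ≤ g x) (hgh : ∀ x y, x < y → g x * h y ≤ g y * h x) :
    LikelihoodRatioLE (volume.withDensity fun t => ENNReal.ofReal (h t))
      (volume.withDensity fun t => ENNReal.ofReal (g t)) :=
  likelihoodRatioLE_withDensity hg.ennreal_ofReal hh.ennreal_ofReal fun x y hxy => by
    rw [← ENNReal.ofReal_mul (hg₀ x), ← ENNReal.ofReal_mul (hg₀ y)]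
    exact ENNReal.ofReal_le_ofReal (hgh x y hxy)

lemma LikelihoodRatioLE.measureReal_preimage_mul_le {Ω : Type*} [MeasurableSpace Ω]
    {Pr : Measure Ω} [IsFiniteMeasure Pr] {X Y : Ω → ℝ}
    (h : LikelihoodRatioLE (Pr.map Y) (Pr.map X))
    (hX : Measurable X) (hY : Measurable Y) {I J : Set ℝ} (hI : MeasurableSet I)
    (hJ : MeasurableSet J) (hIJ : ∀ x ∈ I, ∀ y ∈ J, x < y) :
    Pr.real (X ⁻¹' I) * Pr.real (Y ⁻¹' J) ≤ Pr.real (X ⁻¹' J) * Pr.real (Y ⁻¹' I) := by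
  have := ENNReal.toReal_mono (by finiteness) (h hI hJ hIJ)
  simpa only [ENNReal.toReal_mul, ← measureReal_def, map_measureReal_apply hX hI,
    map_measureReal_apply hX hJ, map_measureReal_apply hY hI, map_measureReal_apply hY hJ]
    using this

end LikelihoodRatio

section RegressionDependence

variable {Ω : Type*} [MeasurableSpace Ω] {Pr : Measure Ω}

def condMean (Pr : Measure Ω) (B : Set Ω) (X : Ω → ℝ) : ℝ :=
  (∫ ω in B, X ω ∂Pr) / Pr.real B

def PositivelyRegressionDependent (Pr : Measure Ω) (T₁ T₂ : Ω → ℝ) : Prop :=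
  ∀ φ : ℝ → ℝ, Measurable φ → Monotone φ → (∃ C, ∀ x, |φ x| ≤ C) → ∀ u u' : ℝ, u ≤ u' →
    (Pr (T₂ ⁻¹' Ici u) ≠ 0 → Pr (T₂ ⁻¹' Ici u') ≠ 0 →
      condMean Pr (T₂ ⁻¹' Ici u) (φ ∘ T₁) ≤ condMean Pr (T₂ ⁻¹' Ici u') (φ ∘ T₁)) ∧
    (Pr (T₂ ⁻¹' Iio u) ≠ 0 → Pr (T₂ ⁻¹' Iio u') ≠ 0 →
      condMean Pr (T₂ ⁻¹' Iio u) (φ ∘ T₁) ≤ condMean Pr (T₂ ⁻¹' Iio u') (φ ∘ T₁))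

lemma condMean_indicator_one_comp {T : Ω → ℝ} {S : Set ℝ} (hT : Measurable T) (hS : MeasurableSet S)
    (B : Set Ω) : condMean Pr B (S.indicator 1 ∘ T) = Pr.real (B ∩ T ⁻¹' S) / Pr.real B := by
  rw [condMean, show S.indicator 1 ∘ T = (T ⁻¹' S).indicator (1 : Ω → ℝ) from rfl,
    setIntegral_indicator (hT hS)]
  simp

lemma condMean_neg (B : Set Ω) (X : Ω → ℝ) : condMean Pr B (-X) = -condMean Pr B X := by
  simp [condMean, integral_neg, neg_div]

lemma IsUpperSet.monotone_indicator_one {α : Type*} [Preorder α] {S : Set α} (hS : IsUpperSet S) :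
    Monotone (S.indicator (1 : α → ℝ)) := by
  intro x y hxy
  by_cases hx : x ∈ S
  · simp [hx, hS hxy hx]
  · simp [hx, indicator_nonneg]

lemma IsLowerSet.antitone_indicator_one {α : Type*} [Preorder α] {S : Set α}
    (hS : IsLowerSet S) : Antitone (S.indicator (1 : α → ℝ)) := by
  intro x y hxy
  by_cases hy : y ∈ S
  · simp [hy, hS hxy hy]
  · simp [hy, indicator_nonneg]

lemma abs_indicator_one_le {α : Type*} (S : Set α) (x : α) : |S.indicator (1 : α → ℝ) x| ≤ 1 := by
  by_cases hx : x ∈ S <;> simp [hx]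

lemma measure_ne_zero_of_measureReal_pos {B : Set Ω} (h : 0 < Pr.real B) : Pr B ≠ 0 :=
  fun h0 => h.ne' (by simp [measureReal_def, h0])

namespace PositivelyRegressionDependent

variable {T₁ T₂ : Ω → ℝ} {u u' : ℝ}

lemma measureReal_Iio_inter_mul_le (h : PositivelyRegressionDependent Pr T₁ T₂)
    (hT₁ : Measurable T₁) (huu' : u ≤ u') (s : ℝ) (hu : 0 < Pr.real (T₂ ⁻¹' Iio u))
    (hu' : 0 < Pr.real (T₂ ⁻¹' Iio u')) :
    Pr.real (T₂ ⁻¹' Iio u ∩ T₁ ⁻¹' Ici s) * Pr.real (T₂ ⁻¹' Iio u') ≤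
      Pr.real (T₂ ⁻¹' Iio u' ∩ T₁ ⁻¹' Ici s) * Pr.real (T₂ ⁻¹' Iio u) := by
  have := (h _ (measurable_one.indicator measurableSet_Ici)
    (isUpperSet_Ici s).monotone_indicator_one ⟨1, abs_indicator_one_le _⟩ u u' huu').2
    (measure_ne_zero_of_measureReal_pos hu) (measure_ne_zero_of_measureReal_pos hu')
  rwa [condMean_indicator_one_comp hT₁ measurableSet_Ici,
    condMean_indicator_one_comp hT₁ measurableSet_Ici, div_le_div_iff₀ hu hu'] at this

lemma measureReal_Ici_inter_mul_le (h : PositivelyRegressionDependent Pr T₁ T₂)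
    (hT₁ : Measurable T₁) (huu' : u ≤ u') (s : ℝ) (hu : 0 < Pr.real (T₂ ⁻¹' Ici u))
    (hu' : 0 < Pr.real (T₂ ⁻¹' Ici u')) :
    Pr.real (T₂ ⁻¹' Ici u' ∩ T₁ ⁻¹' Iic s) * Pr.real (T₂ ⁻¹' Ici u) ≤
      Pr.real (T₂ ⁻¹' Ici u ∩ T₁ ⁻¹' Iic s) * Pr.real (T₂ ⁻¹' Ici u') := by
  have := (h _ (measurable_one.indicator measurableSet_Iic).neg
    (isLowerSet_Iic s).antitone_indicator_one.neg
    ⟨1, fun x => (abs_neg _).trans_le (abs_indicator_one_le _ x)⟩ u u' huu').1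
    (measure_ne_zero_of_measureReal_pos hu) (measure_ne_zero_of_measureReal_pos hu')
  rwa [Pi.neg_comp, condMean_neg, condMean_neg, neg_le_neg_iff,
    condMean_indicator_one_comp hT₁ measurableSet_Iic,
    condMean_indicator_one_comp hT₁ measurableSet_Iic, div_le_div_iff₀ hu' hu] at this

end PositivelyRegressionDependent

end RegressionDependence

section Regions

def rejectionRegion (c : ℝ) : Set ℝ := Iic (-c) ∪ Ici c

/-- Values of the statistic whose rejection is a type 1 error (`θ = 0`) or a type 3 error (the
claimed sign is wrong). -/
def errorRegion (c θ : ℝ) : Set ℝ := {t ∈ rejectionRegion c | θ = 0 ∨ (θ ≠ 0 ∧ θ * t < 0)}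

def errorEvent {Ω : Type*} (c θ₁ θ₂ : ℝ) (T₁ T₂ : Ω → ℝ) : Set Ω :=
  T₁ ⁻¹' errorRegion c θ₁ ∪ T₁ ⁻¹' rejectionRegion c ∩ T₂ ⁻¹' errorRegion c θ₂

lemma errorRegion_zero (c : ℝ) : errorRegion c 0 = rejectionRegion c := by
  ext t; simp [errorRegion]

lemma errorRegion_of_pos {c θ : ℝ} (hc : 0 < c) (hθ : 0 < θ) : errorRegion c θ = Iic (-c) := by
  ext t
  simp only [errorRegion, rejectionRegion, mem_ofPred_eq, mem_union, mem_Iic, mem_Ici,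
    hθ.ne', false_or, ne_eq, not_false_eq_true, true_and]
  constructor
  · rintro ⟨h | h, hneg⟩
    · exact h
    · nlinarith
  · intro h
    exact ⟨Or.inl h, by nlinarith⟩

lemma errorRegion_of_neg {c θ : ℝ} (hc : 0 < c) (hθ : θ < 0) : errorRegion c θ = Ici c := by
  ext t
  simp only [errorRegion, rejectionRegion, mem_ofPred_eq, mem_union, mem_Iic, mem_Ici,
    hθ.ne, false_or, ne_eq, not_false_eq_true, true_and]
  constructor
  · rintro ⟨h | h, hneg⟩
    · nlinarith
    · exact h
  · intro h
    exact ⟨Or.inr h, by nlinarith⟩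

lemma two_mul_min_le_iff_mem_rejectionRegion {F₀ : ℝ → ℝ} (hF₀ : StrictMono F₀) {α c : ℝ}
    (hlo : F₀ (-c) = α / 2) (hhi : F₀ c = 1 - α / 2) (t : ℝ) :
    2 * min (F₀ t) (1 - F₀ t) ≤ α ↔ t ∈ rejectionRegion c := by
  have h₁ : t ≤ -c ↔ F₀ t ≤ α / 2 := hlo ▸ hF₀.le_iff_le.symm
  have h₂ : c ≤ t ↔ 1 - α / 2 ≤ F₀ t := hhi ▸ hF₀.le_iff_le.symm
  rw [rejectionRegion, mem_union, mem_Iic, mem_Ici, h₁, h₂, ← le_div_iff₀' two_pos, min_le_iff]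
  constructor <;> rintro (h | h) <;> [left; right; left; right] <;> linarith

lemma setOf_exists_fin_two_eq_errorEvent {Ω : Type*} {F₀ : ℝ → ℝ} {α c θ₁ θ₂ : ℝ} {T₁ T₂ : Ω → ℝ}
    (hrej : ∀ t, 2 * min (F₀ t) (1 - F₀ t) ≤ α ↔ t ∈ rejectionRegion c) :
    {ω | ∃ i : Fin 2,
        (∀ j : Fin 2, j ≤ i → 2 * min (F₀ ((![T₁, T₂] j) ω)) (1 - F₀ ((![T₁, T₂] j) ω)) ≤ α) ∧
        ((![θ₁, θ₂] i : ℝ) = 0 ∨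
          ((![θ₁, θ₂] i : ℝ) ≠ 0 ∧ (![θ₁, θ₂] i : ℝ) * (![T₁, T₂] i) ω < 0))} =
      errorEvent c θ₁ θ₂ T₁ T₂ := by
  ext ω
  simp [Fin.exists_fin_two, hrej, errorEvent, errorRegion]
  tauto

lemma exists_pos_eq_one_sub {F₀ : ℝ → ℝ} (hcont : Continuous F₀) (hmono : Monotone F₀)
    (hsym : ∀ x, F₀ (-x) = 1 - F₀ x) {a : ℝ} (ha : a < 1 / 2) (hb : ∃ b, 1 - a ≤ F₀ b) :
    ∃ c, 0 < c ∧ F₀ (-c) = a ∧ F₀ c = 1 - a := by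
  obtain ⟨b, hb⟩ := hb
  have h₀ : F₀ 0 = 1 / 2 := by linarith [neg_zero (G := ℝ) ▸ hsym 0]
  have hb₀ : 0 ≤ b := (hmono.reflect_lt (by linarith : F₀ 0 < F₀ b)).le
  obtain ⟨c, ⟨hc₀, -⟩, hc⟩ := intermediate_value_Icc hb₀ hcont.continuousOn ⟨by linarith, hb⟩
  refine ⟨c, hc₀.lt_of_ne ?_, by rw [hsym, hc]; ring, hc⟩
  rintro rfl
  linarith

end Regions

section ErrorBounds

variable {Ω : Type*} [MeasurableSpace Ω] {Pr : Measure Ω} [IsProbabilityMeasure Pr]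
  {T : Ω → ℝ} {F : ℝ → ℝ → ℝ} {θ a c : ℝ}

lemma exists_one_sub_le_apply_zero (hstoch : ∀ θ θ' : ℝ, θ ≤ θ' → ∀ x, F θ' x ≤ F θ x)
    (hsym : ∀ x, F 0 (-x) = 1 - F 0 x) (hT : Measurable T)
    (hcdf : ∀ x, Pr.real (T ⁻¹' Iic x) = F θ x) (ha : 0 < a) : ∃ b, 1 - a ≤ F 0 b := by
  rcases le_total 0 θ with hθ | hθ
  · obtain ⟨b, hb⟩ := ((cdf_map_eq_s17 hT hcdf ▸ tendsto_cdf_atTop (μ := Pr.map T)).eventually_const_le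
      (by linarith : 1 - a < 1)).exists
    exact ⟨b, hb.trans (hstoch 0 θ hθ b)⟩
  · obtain ⟨b, hb⟩ :=
      ((cdf_map_eq_s17 hT hcdf ▸ tendsto_cdf_atBot (μ := Pr.map T)).eventually_le_const ha).exists
    exact ⟨-b, by linarith [hsym b, hstoch θ 0 hθ b]⟩

lemma measureReal_preimage_rejectionRegion_le [NullSingletonClass (Pr.map T)] {G : ℝ → ℝ}
    (hT : Measurable T) (hcdf : ∀ x, Pr.real (T ⁻¹' Iic x) = G x) (c : ℝ) :
    Pr.real (T ⁻¹' rejectionRegion c) ≤ G (-c) + (1 - G c) := by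
  rw [← hcdf, ← hcdf, ← measureReal_preimage_Ici_eq_one_sub hT, rejectionRegion, preimage_union]
  exact measureReal_union_le _ _

lemma measureReal_preimage_errorRegion_le [NullSingletonClass (Pr.map T)]
    (hstoch : ∀ θ θ' : ℝ, θ ≤ θ' → ∀ x, F θ' x ≤ F θ x) (hT : Measurable T)
    (hcdf : ∀ x, Pr.real (T ⁻¹' Iic x) = F θ x) (hθ : θ ≠ 0) (hc : 0 < c)
    (hlo : F 0 (-c) = a) (hhi : F 0 c = 1 - a) : Pr.real (T ⁻¹' errorRegion c θ) ≤ a := by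
  rcases hθ.lt_or_gt with hθ | hθ
  · rw [errorRegion_of_neg hc hθ, measureReal_preimage_Ici_eq_one_sub hT, hcdf]
    linarith [hstoch θ 0 hθ.le c]
  · rw [errorRegion_of_pos hc hθ, hcdf, ← hlo]
    exact hstoch 0 θ hθ.le (-c)

lemma measureReal_union_inter_union_le {L₁ U₁ L₂ U₂ : Set Ω} (hU₂ : MeasurableSet U₂)
    (ha : 2 * a ≤ 1)
    (hlr : Pr.real L₁ * (1 - 2 * a) ≤ (1 - Pr.real L₁ - Pr.real U₁) * a)
    (hprd : Pr.real (L₂ ∩ U₁) * (1 - a) ≤ Pr.real (U₂ᶜ ∩ U₁) * a) (hU : Pr.real U₂ ≤ a) :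
    Pr.real (L₁ ∪ U₁ ∩ (L₂ ∪ U₂)) ≤ 2 * a := by
  have hsplit : Pr.real (U₁ ∩ U₂) + Pr.real (U₂ᶜ ∩ U₁) = Pr.real U₁ := by
    rw [← sdiff_eq_compl_inter, measureReal_inter_add_sdiff hU₂]
  have hU₁U₂ : Pr.real (U₁ ∩ U₂) ≤ a := (measureReal_mono inter_subset_right).trans hU
  have hunion : Pr.real (L₁ ∪ U₁ ∩ (L₂ ∪ U₂)) ≤
      Pr.real L₁ + Pr.real (L₂ ∩ U₁) + Pr.real (U₁ ∩ U₂) := by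
    rw [inter_union_distrib_left, ← union_assoc, inter_comm U₁ L₂]
    exact (measureReal_union_le _ _).trans (add_le_add_left (measureReal_union_le _ _) _)
  nlinarith [mul_le_mul_of_nonneg_right hU₁U₂ (by linarith : (0 : ℝ) ≤ 1 - 2 * a),
    measureReal_nonneg (μ := Pr) (s := L₁), measureReal_nonneg (μ := Pr) (s := L₂ ∩ U₁)]

end ErrorBounds

section TrueSecondHypothesis

variable {Ω : Type*} [MeasurableSpace Ω] {Pr : Measure Ω} [IsProbabilityMeasure Pr]
  {T₁ T₂ : Ω → ℝ} {θ₁ a c : ℝ}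

lemma measureReal_errorEvent_le_of_pos [NullSingletonClass (Pr.map T₂)] (hT₁ : Measurable T₁)
    (hT₂ : Measurable T₂) (hLR : LikelihoodRatioLE (Pr.map T₂) (Pr.map T₁))
    (hPRD : PositivelyRegressionDependent Pr T₁ T₂) (hθ₁ : 0 < θ₁) (hc : 0 < c) (ha : 0 < a)
    (hlo : Pr.real (T₂ ⁻¹' Iic (-c)) = a) (hhi : Pr.real (T₂ ⁻¹' Iic c) = 1 - a) :
    Pr.real (errorEvent c θ₁ 0 T₁ T₂) ≤ 2 * a := by
  have hIio : ∀ x, Pr.real (T₂ ⁻¹' Iio x) = Pr.real (T₂ ⁻¹' Iic x) := fun x => by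
    simpa using measureReal_preimage_inter_congr hT₂ (Iio_ae_eq_Iic (a := x)) univ
  have hU₂ : Pr.real (T₂ ⁻¹' Ici c) = a := by
    rw [measureReal_preimage_Ici_eq_one_sub hT₂, hhi]; ring
  have ha₂ : 2 * a ≤ 1 := by
    linarith [measureReal_mono (μ := Pr)
      (preimage_mono (f := T₂) (Iic_subset_Iic.2 (neg_le_self hc.le)))]
  have hlr := hLR.measureReal_preimage_mul_le hT₁ hT₂ (I := Iic (-c)) (J := Ioo (-c) c)
    measurableSet_Iic measurableSet_Ioo fun x hx y hy => (mem_Iic.1 hx).trans_lt hy.1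
  rw [measureReal_preimage_Ioo_eq hT₁ (neg_lt_self hc),
    measureReal_preimage_Ioo_eq hT₂ (neg_lt_self hc), hlo, hU₂] at hlr
  have hprd := hPRD.measureReal_Iio_inter_mul_le hT₁ (neg_le_self hc.le) c (by rwa [hIio, hlo])
    (by rw [hIio, hhi]; linarith)
  rw [hIio, hIio, hlo, hhi, measureReal_preimage_inter_congr hT₂ Iio_ae_eq_Iic, ← compl_Ici,
    preimage_compl] at hprd
  refine (measureReal_mono ?_).trans (measureReal_union_inter_union_le (L₁ := T₁ ⁻¹' Iic (-c))
    (hT₂ measurableSet_Ici) ha₂ (by linarith) hprd hU₂.le)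
  rw [errorEvent, errorRegion_of_pos hc hθ₁, errorRegion_zero, rejectionRegion, preimage_union,
    preimage_union]
  intro ω
  simp only [mem_union, mem_inter_iff]
  tauto

lemma measureReal_errorEvent_le_of_neg [NullSingletonClass (Pr.map T₂)] (hT₁ : Measurable T₁)
    (hT₂ : Measurable T₂) (hLR : LikelihoodRatioLE (Pr.map T₁) (Pr.map T₂))
    (hPRD : PositivelyRegressionDependent Pr T₁ T₂) (hθ₁ : θ₁ < 0) (hc : 0 < c) (ha : 0 < a)
    (hlo : Pr.real (T₂ ⁻¹' Iic (-c)) = a) (hhi : Pr.real (T₂ ⁻¹' Iic c) = 1 - a) :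
    Pr.real (errorEvent c θ₁ 0 T₁ T₂) ≤ 2 * a := by
  have hU₂ : Pr.real (T₂ ⁻¹' Ici c) = a := by
    rw [measureReal_preimage_Ici_eq_one_sub hT₂, hhi]; ring
  have hU₂' : Pr.real (T₂ ⁻¹' Ici (-c)) = 1 - a := by
    rw [measureReal_preimage_Ici_eq_one_sub hT₂, hlo]
  have ha₂ : 2 * a ≤ 1 := by
    linarith [measureReal_mono (μ := Pr)
      (preimage_mono (f := T₂) (Iic_subset_Iic.2 (neg_le_self hc.le)))]
  have hlr := hLR.measureReal_preimage_mul_le hT₂ hT₁ (I := Ioo (-c) c) (J := Ici c)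
    measurableSet_Ioo measurableSet_Ici fun x hx y hy => hx.2.trans_le hy
  rw [measureReal_preimage_Ioo_eq hT₁ (neg_lt_self hc),
    measureReal_preimage_Ioo_eq hT₂ (neg_lt_self hc), hlo, hU₂] at hlr
  have hprd := hPRD.measureReal_Ici_inter_mul_le hT₁ (neg_le_self hc.le) (-c)
    (by rw [hU₂']; linarith) (by rwa [hU₂])
  rw [hU₂, hU₂', measureReal_preimage_inter_congr hT₂ (Ioi_ae_eq_Ici (a := -c)).symm,
    ← compl_Iic, preimage_compl] at hprd
  refine (measureReal_mono ?_).trans (measureReal_union_inter_union_le (L₁ := T₁ ⁻¹' Ici c)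
    (hT₂ measurableSet_Iic) ha₂ (by linarith) hprd hlo.le)
  rw [errorEvent, errorRegion_of_neg hc hθ₁, errorRegion_zero, rejectionRegion, preimage_union,
    preimage_union]
  intro ω
  simp only [mem_union, mem_inter_iff]
  tauto

end TrueSecondHypothesis

end

theorem procedure2_controls_mdFWER_two_PRDS_general
    {Ω : Type*} [MeasurableSpace Ω] (Pr : Measure Ω) [IsProbabilityMeasure Pr]
    (F : ℝ → ℝ → ℝ)
    (hFcont : ∀ θ, Continuous (F θ))
    (hF0strict : StrictMono (F 0))
    (hFsym : ∀ x : ℝ, F 0 (-x) = 1 - F 0 x)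
    (hstoch : ∀ θ θ' : ℝ, θ ≤ θ' → ∀ x, F θ' x ≤ F θ x)
    -- MLR assumption (Assumption 2)
    (f : ℝ → ℝ → ℝ)
    (hf_nonneg : ∀ θ x, 0 ≤ f θ x)
    (hf_meas : ∀ θ, Measurable (f θ))
    (hf_cdf : ∀ θ x, F θ x = ∫ t in Set.Iic x, f θ t)
    (hMLR : ∀ θ θ' : ℝ, θ < θ' → ∀ x₁ x₂ : ℝ, x₁ < x₂ →
      f θ' x₁ * f θ x₂ ≤ f θ' x₂ * f θ x₁)
    (θ₁ θ₂ : ℝ) (T₁ T₂ : Ω → ℝ) (hT₁ : Measurable T₁) (hT₂ : Measurable T₂)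
    (hcdf₁ : ∀ x : ℝ, (Pr {ω | T₁ ω ≤ x}).toReal = F θ₁ x)
    (hcdf₂ : ∀ x : ℝ, (Pr {ω | T₂ ω ≤ x}).toReal = F θ₂ x)
    -- Assumption 5 (positive regression dependence of T₁ on T₂)
    (hPRDS : ∀ φ : ℝ → ℝ, Measurable φ → Monotone φ → (∃ C, ∀ x, |φ x| ≤ C) →
      ∀ u u' : ℝ, u ≤ u' →
        (Pr {ω | u ≤ T₂ ω} ≠ 0 → Pr {ω | u' ≤ T₂ ω} ≠ 0 →
          (∫ ω in {ω | u ≤ T₂ ω}, φ (T₁ ω) ∂Pr) / (Pr {ω | u ≤ T₂ ω}).toReal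
            ≤ (∫ ω in {ω | u' ≤ T₂ ω}, φ (T₁ ω) ∂Pr)
              / (Pr {ω | u' ≤ T₂ ω}).toReal) ∧
        (Pr {ω | T₂ ω < u} ≠ 0 → Pr {ω | T₂ ω < u'} ≠ 0 →
          (∫ ω in {ω | T₂ ω < u}, φ (T₁ ω) ∂Pr) / (Pr {ω | T₂ ω < u}).toReal
            ≤ (∫ ω in {ω | T₂ ω < u'}, φ (T₁ ω) ∂Pr)
              / (Pr {ω | T₂ ω < u'}).toReal))
    (α : ℝ) (hα : α ∈ Set.Ioo (0 : ℝ) 1) :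
    (Pr {ω | ∃ i : Fin 2,
        (∀ j : Fin 2, j ≤ i →
          2 * min (F 0 ((![T₁, T₂] j) ω)) (1 - F 0 ((![T₁, T₂] j) ω)) ≤ α) ∧
        ((![θ₁, θ₂] i : ℝ) = 0 ∨
          ((![θ₁, θ₂] i : ℝ) ≠ 0 ∧ (![θ₁, θ₂] i : ℝ) * (![T₁, T₂] i) ω < 0))}).toReal
      ≤ α := by
  obtain ⟨hα₀, hα₁⟩ := hα
  have hlaw : ∀ {θ : ℝ} {T : Ω → ℝ}, Measurable T → (∀ x, Pr.real (T ⁻¹' Iic x) = F θ x) →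
      Pr.map T = volume.withDensity fun t => ENNReal.ofReal (f θ t) := fun hT hcdf =>
    map_eq_withDensity_of_measureReal_preimage_Iic_eq hT (hf_nonneg _)
      fun x => (hcdf x).trans (hf_cdf _ x)
  have hLR : ∀ {θ θ' : ℝ}, θ < θ' → LikelihoodRatioLE
      (volume.withDensity fun t => ENNReal.ofReal (f θ t))
      (volume.withDensity fun t => ENNReal.ofReal (f θ' t)) := fun h =>
    likelihoodRatioLE_withDensity_ofReal (hf_meas _) (hf_meas _) (hf_nonneg _) (hMLR _ _ h)
  have hlaw₁ := hlaw hT₁ hcdf₁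
  have hlaw₂ := hlaw hT₂ hcdf₂
  have : NullSingletonClass (Pr.map T₁) := hlaw₁ ▸ inferInstance
  have : NullSingletonClass (Pr.map T₂) := hlaw₂ ▸ inferInstance
  obtain ⟨c, hc, hlo, hhi⟩ := exists_pos_eq_one_sub (hFcont 0) hF0strict.monotone hFsym
    (a := α / 2) (by linarith) (exists_one_sub_le_apply_zero hstoch hFsym hT₁ hcdf₁ (by linarith))
  change Pr.real _ ≤ α
  rw [setOf_exists_fin_two_eq_errorEvent (two_mul_min_le_iff_mem_rejectionRegion hF0strict hlo hhi)]
  rcases eq_or_ne θ₁ 0 with rfl | hθ₁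
  · calc _ ≤ Pr.real (T₁ ⁻¹' rejectionRegion c) :=
          measureReal_mono (union_subset (preimage_mono (sep_subset _ _)) inter_subset_left)
      _ ≤ F 0 (-c) + (1 - F 0 c) := measureReal_preimage_rejectionRegion_le hT₁ hcdf₁ c
      _ = α := by rw [hlo, hhi]; ring
  rcases eq_or_ne θ₂ 0 with rfl | hθ₂
  · rcases hθ₁.lt_or_gt with hθ₁ | hθ₁
    · exact (measureReal_errorEvent_le_of_neg hT₁ hT₂ (by rw [hlaw₁, hlaw₂]; exact hLR hθ₁) hPRDS
        hθ₁ hc (by linarith) ((hcdf₂ _).trans hlo) ((hcdf₂ _).trans hhi)).trans_eq (by ring)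
    · exact (measureReal_errorEvent_le_of_pos hT₁ hT₂ (by rw [hlaw₁, hlaw₂]; exact hLR hθ₁) hPRDS
        hθ₁ hc (by linarith) ((hcdf₂ _).trans hlo) ((hcdf₂ _).trans hhi)).trans_eq (by ring)
  calc _ ≤ Pr.real (T₁ ⁻¹' errorRegion c θ₁) + Pr.real (T₂ ⁻¹' errorRegion c θ₂) :=
        (measureReal_mono (union_subset_union_right _ inter_subset_right)).trans
          (measureReal_union_le _ _)
    _ ≤ α / 2 + α / 2 := add_le_add
        (measureReal_preimage_errorRegion_le hstoch hT₁ hcdf₁ hθ₁ hc hlo hhi)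
        (measureReal_preimage_errorRegion_le hstoch hT₂ hcdf₂ hθ₂ hc hlo hhi)
    _ = α := by ring

/-- Proposition 1: For n = 2, under MLR (Assumption 2) and positive
regression dependence of T₁ on T₂ (Assumption 5), Procedure 2 (both critical
constants equal to α) satisfies mdFWER ≤ α for every configuration (θ₁, θ₂). -/
theorem procedure2_controls_mdFWER_two_PRDS
    {Ω : Type*} [MeasurableSpace Ω] (Pr : Measure Ω) [IsProbabilityMeasure Pr]
    (F : ℝ → ℝ → ℝ)
    (hFcont : ∀ θ, Continuous (F θ))
    (hFmono : ∀ θ, Monotone (F θ))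
    (hF0strict : StrictMono (F 0))
    (hFsym : ∀ x : ℝ, F 0 (-x) = 1 - F 0 x)
    (hstoch : ∀ θ θ' : ℝ, θ ≤ θ' → ∀ x, F θ' x ≤ F θ x)
    -- MLR assumption (Assumption 2)
    (f : ℝ → ℝ → ℝ)
    (hf_nonneg : ∀ θ x, 0 ≤ f θ x)
    (hf_meas : ∀ θ, Measurable (f θ))
    (hf_cdf : ∀ θ x, F θ x = ∫ t in Set.Iic x, f θ t)
    (hMLR : ∀ θ θ' : ℝ, θ < θ' → ∀ x₁ x₂ : ℝ, x₁ < x₂ →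
      f θ' x₁ * f θ x₂ ≤ f θ' x₂ * f θ x₁)
    (θ₁ θ₂ : ℝ) (T₁ T₂ : Ω → ℝ) (hT₁ : Measurable T₁) (hT₂ : Measurable T₂)
    (hcdf₁ : ∀ x : ℝ, (Pr {ω | T₁ ω ≤ x}).toReal = F θ₁ x)
    (hcdf₂ : ∀ x : ℝ, (Pr {ω | T₂ ω ≤ x}).toReal = F θ₂ x)
    -- Assumption 5 (positive regression dependence of T₁ on T₂)
    (hPRDS : ∀ φ : ℝ → ℝ, Measurable φ → Monotone φ → (∃ C, ∀ x, |φ x| ≤ C) →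
      ∀ u u' : ℝ, u ≤ u' →
        (Pr {ω | u ≤ T₂ ω} ≠ 0 → Pr {ω | u' ≤ T₂ ω} ≠ 0 →
          (∫ ω in {ω | u ≤ T₂ ω}, φ (T₁ ω) ∂Pr) / (Pr {ω | u ≤ T₂ ω}).toReal
            ≤ (∫ ω in {ω | u' ≤ T₂ ω}, φ (T₁ ω) ∂Pr)
              / (Pr {ω | u' ≤ T₂ ω}).toReal) ∧
        (Pr {ω | T₂ ω < u} ≠ 0 → Pr {ω | T₂ ω < u'} ≠ 0 →
          (∫ ω in {ω | T₂ ω < u}, φ (T₁ ω) ∂Pr) / (Pr {ω | T₂ ω < u}).toReal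
            ≤ (∫ ω in {ω | T₂ ω < u'}, φ (T₁ ω) ∂Pr)
              / (Pr {ω | T₂ ω < u'}).toReal))
    (α : ℝ) (hα : α ∈ Set.Ioo (0 : ℝ) 1) :
    (Pr {ω | ∃ i : Fin 2,
        (∀ j : Fin 2, j ≤ i →
          2 * min (F 0 ((![T₁, T₂] j) ω)) (1 - F 0 ((![T₁, T₂] j) ω)) ≤ α) ∧
        ((![θ₁, θ₂] i : ℝ) = 0 ∨
          ((![θ₁, θ₂] i : ℝ) ≠ 0 ∧ (![θ₁, θ₂] i : ℝ) * (![T₁, T₂] i) ω < 0))}).toReal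
      ≤ α :=
  procedure2_controls_mdFWER_two_PRDS_general Pr F hFcont hF0strict hFsym hstoch f hf_nonneg hf_meas
    hf_cdf hMLR θ₁ θ₂ T₁ T₂ hT₁ hT₂ hcdf₁ hcdf₂ hPRDS α hα
end
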